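/- arXiv:1508.07655 — 5 statements merged into one kernel-verified Lean document; each statement's English description precedes it below -/
import Mathlib

section
/- Fix an integer g ≥ 2 and an odd prime ℓ. Let G be a subgroup of the group GSp_{2g}(F_ℓ) of symplectic similitudes (invertible 2g×2g matrices A over F_ℓ with Aᵀ·J·A = γ·J for some γ ∈ F_ℓ^×), acting naturally on V = F_ℓ^{2g}. Suppose (a) G contains a transvection, i.e., an element A with det(A) = 1 whose fixed subspace {v ∈ V : A·v = v} has dimension 2g − 1; (b) the action of G on V is irreducible, i.e., the only G-stable subspaces of V are 0 and V; and (c) the action of G on V is primitive, i.e., there is no integer r ≥ 2 and nonzero subspaces W_1, …, W_r of V with V = W_1 ⊕ ⋯ ⊕ W_r such that every element of G permutes the set {W_1, …, W_r}. Then G contains the symplectic group Sp_{2g}(F_ℓ) = {A : Aᵀ·J·A = J}. -/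
/-!
A transvection lying in `GSp` is a symplectic transvection `x ↦ x + c ω(x, v) v`. Let `D` be the
set of `v` for which `G` contains these transvections for every `c`; over the prime field a single
`c ≠ 0` suffices, so `D ≠ 0`. Since `G` normalises its transvections, `D` is `G`-stable, hence
spans `V` by irreducibility, and conjugating one transvection by another shows that `D` contains
the plane `⟨u, v⟩` whenever `ω(u, v) ≠ 0`. In the graph on `D ∖ {0}` joining non-orthogonal
vectors, the spans of the connected components are mutually orthogonal and permuted by `G`, so
primitivity makes the graph connected. For orthogonal `u, v ∈ D`, connectedness and `ℓ ≥ 3` then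
produce `z ∈ D` with `ω(u + z, v - z) ≠ 0`, which puts `u + v = (u + z) + (v - z)` in `D`. So
`D = V` and `G` contains every symplectic transvection. These generate `Sp`: a symplectic matrix
is brought back to the identity by moving the standard hyperbolic pairs `(eₐ, fₐ)` into place one
at a time.
-/

open Matrix

/-- The standard symplectic matrix `[[0, I], [-I, 0]]`. -/
def Jmat (g : ℕ) (R : Type) [CommRing R] : Matrix (Fin g ⊕ Fin g) (Fin g ⊕ Fin g) R :=
  Matrix.fromBlocks 0 1 (-1) 0

theorem exists_add_mul_ne_zero_and_add_mul_ne_zero {K : Type*} [Field K] (hK : 2 < Nat.card K)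
    {a b c d : K} (hab : a ≠ 0 ∨ b ≠ 0) (hcd : c ≠ 0 ∨ d ≠ 0) :
    ∃ s, a + s * b ≠ 0 ∧ c + s * d ≠ 0 := by
  have : Finite K := Nat.finite_of_card_ne_zero (by omega)
  obtain ⟨s, hs⟩ : ∃ s, s ∉ ({-a / b, -c / d} : Set K) := by
    by_contra! h
    have := Set.ncard_le_ncard (s := Set.univ) (fun s _ => h s) (Set.toFinite _)
    rw [Set.ncard_univ] at this
    have := this.trans (Set.ncard_insert_le _ _)
    rw [Set.ncard_singleton] at this
    omega
  have root {a b : K} (hab : a ≠ 0 ∨ b ≠ 0) (h : a + s * b = 0) : s = -a / b := by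
    rcases eq_or_ne b 0 with rfl | hb
    · simp_all
    · field_simp; linear_combination h
  exact ⟨s, fun h => hs (Or.inl (root hab h)), fun h => hs (Or.inr (root hcd h))⟩

theorem Matrix.exists_eq_vecMulVec_of_finrank_range_eq_one {m n K : Type*} [Fintype n]
    [DecidableEq n] [Field K] {M : Matrix m n K}
    (h : Module.finrank K (LinearMap.range (Matrix.toLin' M)) = 1) :
    ∃ v w, v ≠ 0 ∧ M = vecMulVec v w := by
  obtain ⟨⟨v, hv⟩, hv0⟩ := Module.finrank_pos_iff_exists_ne_zero.mp (h ▸ Nat.one_pos)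
  choose w hw using fun j => (finrank_eq_one_iff_of_nonzero' _ hv0).mp h
    ⟨M *ᵥ Pi.single j 1, LinearMap.mem_range_self (Matrix.toLin' M) _⟩
  refine ⟨v, w, fun h => hv0 (Subtype.ext h), Matrix.ext fun i j => ?_⟩
  have := congrArg (fun x : LinearMap.range (Matrix.toLin' M) => (x : m → K) i) (hw j)
  simp only [SetLike.val_smul, Pi.smul_apply, smul_eq_mul, mulVec_single_one, col_apply] at this
  rw [← this, vecMulVec_apply, mul_comm]

theorem Matrix.units_ext_smul {n R : Type*} [Fintype n] [DecidableEq n] [Semiring R]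
    {A B : (Matrix n n R)ˣ} (h : ∀ x : n → R, A • x = B • x) : A = B :=
  Units.ext (Matrix.ext_iff_smul.mpr h)

theorem Submodule.exists_mem_apply_ne_zero_and_apply_ne_zero {R M N : Type*} [Semiring R]
    [AddCommMonoid M] [Module R M] [AddCommMonoid N] [Module R N] {L : Submodule R M}
    {f f' : M →ₗ[R] N} (hf : ∃ z ∈ L, f z ≠ 0) (hf' : ∃ z ∈ L, f' z ≠ 0) :
    ∃ z ∈ L, f z ≠ 0 ∧ f' z ≠ 0 := by
  obtain ⟨z, hz, hfz⟩ := hf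
  obtain ⟨z', hz', hfz'⟩ := hf'
  by_cases h : f' z = 0
  · by_cases h' : f z' = 0
    · exact ⟨z + z', L.add_mem hz hz', by simp [h', hfz], by simp [h, hfz']⟩
    · exact ⟨z', hz', h', hfz'⟩
  · exact ⟨z, hz, hfz, h⟩

namespace LinearMap.BilinForm

variable {K M : Type*} [Field K] [AddCommGroup M] [Module K M] {B : LinearMap.BilinForm K M}

theorem apply_eq_zero_of_mem_span {s t : Set M} (h : ∀ x ∈ s, ∀ y ∈ t, B x y = 0) {x y : M}
    (hx : x ∈ Submodule.span K s) (hy : y ∈ Submodule.span K t) : B x y = 0 := by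
  have ht (x) (hx : x ∈ s) : Submodule.span K t ≤ LinearMap.ker (B x) :=
    Submodule.span_le.mpr fun y hy => h x hx y hy
  exact (Submodule.span_le (p := LinearMap.ker (B.flip y)) |>.mpr fun x hx' => ht x hx' hy) hx

theorem iSupIndep_of_pairwise_orthogonal (hB : B.SeparatingLeft) {ι : Type*}
    {W : ι → Submodule K M} (horth : Pairwise fun i j => ∀ x ∈ W i, ∀ y ∈ W j, B x y = 0)
    (htop : ⨆ i, W i = ⊤) : iSupIndep W := by
  refine iSupIndep_def.mpr fun i => disjoint_iff.mpr <| (Submodule.eq_bot_iff _).mpr ?_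
  rintro x ⟨hxi, hx⟩
  suffices ⨆ j, W j ≤ LinearMap.ker (B x) from
    hB x fun y => this (htop ▸ Submodule.mem_top : y ∈ ⨆ j, W j)
  refine iSup_le fun j y hy => ?_
  by_cases hji : j = i
  · subst hji
    exact (iSup₂_le fun k hk x hx => horth hk x hx y hy : _ ≤ LinearMap.ker (B.flip y)) hx
  · exact horth (Ne.symm hji) x hxi y hy

end LinearMap.BilinForm

def symplecticForm (g : ℕ) (R : Type) [CommRing R] :
    LinearMap.BilinForm R (Fin g ⊕ Fin g → R) :=
  Matrix.toLinearMap₂' R (Jmat g R)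

section SymplecticForm

variable {g : ℕ} {R : Type} [CommRing R]

local notation "ω" => symplecticForm g R
local notation "V" => Fin g ⊕ Fin g → R

theorem symplecticForm_apply (u v : V) :
    ω u v = ∑ a, u (Sum.inl a) * v (Sum.inr a) - ∑ a, u (Sum.inr a) * v (Sum.inl a) := by
  simp [symplecticForm, Matrix.toLinearMap₂'_apply', Jmat, dotProduct, mulVec,
    Fintype.sum_sum_type, fromBlocks, one_apply, Finset.sum_neg_distrib, sub_eq_add_neg]

@[simp]
theorem symplecticForm_self (u : V) : ω u u = 0 := by
  simp [symplecticForm_apply, mul_comm]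

theorem symplecticForm_swap (u v : V) : ω v u = -ω u v := by
  simp [symplecticForm_apply, mul_comm]

theorem symplecticForm_single_inl (a : Fin g) (v : V) :
    ω (Pi.single (Sum.inl a) 1) v = v (Sum.inr a) := by
  simp [symplecticForm_apply, Pi.single_apply]

theorem symplecticForm_single_inr (a : Fin g) (v : V) :
    ω (Pi.single (Sum.inr a) 1) v = -v (Sum.inl a) := by
  simp [symplecticForm_apply, Pi.single_apply]

theorem symplecticForm_separatingLeft : (symplecticForm g R).SeparatingLeft := by
  intro u hu
  ext (a | a)
  · simpa [symplecticForm_swap (Pi.single _ 1) u, symplecticForm_single_inr]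
      using hu (Pi.single (Sum.inr a) 1)
  · simpa [symplecticForm_swap (Pi.single _ 1) u, symplecticForm_single_inl]
      using hu (Pi.single (Sum.inl a) 1)

theorem transpose_mul_Jmat_mul_eq_smul_iff {M : Matrix (Fin g ⊕ Fin g) (Fin g ⊕ Fin g) R}
    {γ : R} : Mᵀ * Jmat g R * M = γ • Jmat g R ↔ ∀ x y, ω (M *ᵥ x) (M *ᵥ y) = γ * ω x y := by
  rw [← (Matrix.toLinearMap₂' R (S₁ := R) (S₂ := R)).injective.eq_iff, LinearMap.ext_iff₂]
  simp only [symplecticForm, Matrix.toLinearMap₂'_apply', smul_mulVec, dotProduct_smul,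
    smul_eq_mul, Matrix.mul_assoc, ← mulVec_mulVec]
  refine forall_congr' fun x => forall_congr' fun y => ?_
  rw [dotProduct_mulVec x Mᵀ, vecMul_transpose]

theorem one_add_smul_vecMulVec_mulVec (v : V) (c : R) (x : V) :
    (1 + c • vecMulVec v (Jmat g R *ᵥ v)) *ᵥ x = x + (c * ω x v) • v := by
  rw [add_mulVec, one_mulVec, smul_mulVec, vecMulVec_mulVec, op_smul_eq_smul, smul_smul,
    symplecticForm, Matrix.toLinearMap₂'_apply', dotProduct_comm x]

/-- The symplectic transvection `x ↦ x + c ω(x, v) v`. -/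
def symplecticTransvection (v : V) (c : R) :
    (Matrix (Fin g ⊕ Fin g) (Fin g ⊕ Fin g) R)ˣ where
  val := 1 + c • vecMulVec v (Jmat g R *ᵥ v)
  inv := 1 + (-c) • vecMulVec v (Jmat g R *ᵥ v)
  val_inv := Matrix.ext_iff_mulVec.mpr fun x => by
    rw [← mulVec_mulVec, one_add_smul_vecMulVec_mulVec, one_add_smul_vecMulVec_mulVec]
    simp
  inv_val := Matrix.ext_iff_mulVec.mpr fun x => by
    rw [← mulVec_mulVec, one_add_smul_vecMulVec_mulVec, one_add_smul_vecMulVec_mulVec]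
    simp

theorem symplecticTransvection_smul (v : V) (c : R) (x : V) :
    symplecticTransvection v c • x = x + (c * ω x v) • v :=
  one_add_smul_vecMulVec_mulVec v c x

theorem symplecticTransvection_smul_of_orthogonal {v x : V} (h : ω x v = 0)
    (c : R) : symplecticTransvection v c • x = x := by
  simp [symplecticTransvection_smul, h]

theorem symplecticTransvection_zero_left (c : R) :
    symplecticTransvection (0 : V) c = 1 :=
  Matrix.units_ext_smul fun x => by simp [symplecticTransvection_smul]

theorem symplecticTransvection_zero_right (v : V) : symplecticTransvection v (0 : R) = 1 :=
  Matrix.units_ext_smul fun x => by simp [symplecticTransvection_smul]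

theorem symplecticTransvection_mul (v : V) (c d : R) :
    symplecticTransvection v c * symplecticTransvection v d = symplecticTransvection v (c + d) :=
  Matrix.units_ext_smul fun x => by
    simp only [mul_smul, symplecticTransvection_smul, map_add, map_smul, LinearMap.add_apply,
      LinearMap.smul_apply, symplecticForm_self, smul_eq_mul]
    module

theorem symplecticTransvection_pow (v : V) (c : R) (n : ℕ) :
    symplecticTransvection v c ^ n = symplecticTransvection v (n * c) := by
  induction n with
  | zero => exact Matrix.units_ext_smul fun x => by simp [symplecticTransvection_smul]
  | succ n ih => rw [pow_succ, ih, symplecticTransvection_mul]; push_cast; ring_nf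

theorem symplecticTransvection_smul_left (a : R) (v : V) (c : R) :
    symplecticTransvection (a • v) c = symplecticTransvection v (c * a * a) :=
  Matrix.units_ext_smul fun x => by
    simp only [symplecticTransvection_smul, map_smul, smul_eq_mul, smul_smul]
    ring_nf

end SymplecticForm

section Field

variable {g : ℕ} {K : Type} [Field K]

local notation "ω" => symplecticForm g K
local notation "V" => Fin g ⊕ Fin g → K
local notation "𝕄" => Matrix (Fin g ⊕ Fin g) (Fin g ⊕ Fin g) K

variable (g K) in
def symplecticSimilitudes : Subgroup 𝕄ˣ where
  carrier := {A | ∃ γ ≠ 0, ∀ x y, ω (A • x) (A • y) = γ * ω x y}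
  mul_mem' := by
    rintro A B ⟨γ, hγ, hA⟩ ⟨δ, hδ, hB⟩
    exact ⟨γ * δ, mul_ne_zero hγ hδ, fun x y => by rw [mul_smul, mul_smul, hA, hB, mul_assoc]⟩
  one_mem' := ⟨1, one_ne_zero, by simp⟩
  inv_mem' := by
    rintro A ⟨γ, hγ, hA⟩
    refine ⟨γ⁻¹, inv_ne_zero hγ, fun x y => ?_⟩
    have h := hA (A⁻¹ • x) (A⁻¹ • y)
    rw [smul_inv_smul, smul_inv_smul] at h
    rw [h, inv_mul_cancel_left₀ hγ]

variable (g K) in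
def symplecticIsometries : Subgroup 𝕄ˣ where
  carrier := {A | ∀ x y, ω (A • x) (A • y) = ω x y}
  mul_mem' hA hB x y := by rw [mul_smul, mul_smul, hA, hB]
  one_mem' := by simp
  inv_mem' {A} hA x y := by rw [← hA, smul_inv_smul, smul_inv_smul]

theorem mem_symplecticSimilitudes_iff {A : 𝕄ˣ} :
    A ∈ symplecticSimilitudes g K ↔ ∃ γ : K, γ ≠ 0 ∧ (A : 𝕄)ᵀ * Jmat g K * A = γ • Jmat g K := by
  simp only [transpose_mul_Jmat_mul_eq_smul_iff]
  rfl

theorem mem_symplecticIsometries_iff {A : 𝕄ˣ} :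
    A ∈ symplecticIsometries g K ↔ (A : 𝕄)ᵀ * Jmat g K * A = Jmat g K := by
  have h := transpose_mul_Jmat_mul_eq_smul_iff (M := (A : 𝕄)) (γ := 1)
  simp only [one_smul, one_mul] at h
  exact h.symm

theorem symplecticTransvection_mem_symplecticIsometries (v : V) (c : K) :
    symplecticTransvection v c ∈ symplecticIsometries g K := fun x y => by
  simp only [symplecticTransvection_smul, map_add, map_smul, LinearMap.add_apply,
    LinearMap.smul_apply, symplecticForm_self, smul_eq_mul, symplecticForm_swap y v]
  ring

theorem mul_symplecticTransvection_mul_inv {A : 𝕄ˣ} {γ : K} (hγ : γ ≠ 0)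
    (hA : ∀ x y, ω (A • x) (A • y) = γ * ω x y) (v : V) (c : K) :
    A * symplecticTransvection v c * A⁻¹ = symplecticTransvection (A • v) (γ⁻¹ * c) :=
  Matrix.units_ext_smul fun x => by
    have h : ω (A⁻¹ • x) v = γ⁻¹ * ω x (A • v) := by
      rw [← smul_inv_smul A x, hA, inv_smul_smul, inv_mul_cancel_left₀ hγ]
    rw [mul_smul, mul_smul, symplecticTransvection_smul, smul_add, smul_inv_smul, smul_comm, h,
      symplecticTransvection_smul, mul_left_comm, mul_assoc]

theorem symplecticTransvection_sub_smul {x y : V} (h : ω x y ≠ 0) :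
    symplecticTransvection (y - x) (ω x y)⁻¹ • x = y := by
  simp [symplecticTransvection_smul, inv_mul_cancel₀ h]

def transvectionSubgroup (L : Submodule K V) : Subgroup 𝕄ˣ :=
  Subgroup.closure {T | ∃ w ∈ L, ∃ c, symplecticTransvection w c = T}

theorem transvectionSubgroup_le {L : Submodule K V} {H : Subgroup 𝕄ˣ}
    (hH : ∀ w ∈ L, ∀ c, symplecticTransvection w c ∈ H) : transvectionSubgroup L ≤ H :=
  (Subgroup.closure_le H).mpr fun _ ⟨w, hw, c, hT⟩ => hT ▸ hH w hw c

theorem transvectionSubgroup_mono {L L' : Submodule K V} (h : L ≤ L') :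
    transvectionSubgroup L ≤ transvectionSubgroup L' :=
  Subgroup.closure_mono fun _ ⟨w, hw, c, hT⟩ => ⟨w, h hw, c, hT⟩

theorem transvectionSubgroup_le_symplecticIsometries (L : Submodule K V) :
    transvectionSubgroup L ≤ symplecticIsometries g K :=
  transvectionSubgroup_le fun w _ c => symplecticTransvection_mem_symplecticIsometries w c

theorem transvectionSubgroup_le_fixingSubgroup {L : Submodule K V} {s : Set V}
    (h : ∀ x ∈ s, ∀ w ∈ L, ω x w = 0) : transvectionSubgroup L ≤ fixingSubgroup 𝕄ˣ s :=
  transvectionSubgroup_le fun w hw c => (mem_fixingSubgroup_iff 𝕄ˣ).mpr fun x hx =>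
    symplecticTransvection_smul_of_orthogonal (h x hx w hw) c

theorem exists_mem_transvectionSubgroup_smul_eq_of_ne_zero {L : Submodule K V} {x y : V}
    (hxy : ω x y ≠ 0) (h : y - x ∈ L) : ∃ T ∈ transvectionSubgroup L, T • x = y :=
  ⟨_, Subgroup.subset_closure ⟨y - x, h, _, rfl⟩, symplecticTransvection_sub_smul hxy⟩

theorem exists_mem_transvectionSubgroup_smul_eq {L : Submodule K V}
    (hL : ∀ v ∈ L, v ≠ 0 → ∃ w ∈ L, ω v w ≠ 0) {x y : V} (hx : x ∈ L) (hy : y ∈ L)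
    (hx0 : x ≠ 0) (hy0 : y ≠ 0) : ∃ T ∈ transvectionSubgroup L, T • x = y := by
  by_cases hxy : ω x y = 0
  · obtain ⟨z, hz, hxz, hzy⟩ := Submodule.exists_mem_apply_ne_zero_and_apply_ne_zero
      (f := ω x) (f' := ω y) (hL x hx hx0) (hL y hy hy0)
    rw [← neg_ne_zero, ← symplecticForm_swap] at hzy
    obtain ⟨T₁, hT₁, h₁⟩ :=
      exists_mem_transvectionSubgroup_smul_eq_of_ne_zero hxz (L.sub_mem hz hx)
    obtain ⟨T₂, hT₂, h₂⟩ :=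
      exists_mem_transvectionSubgroup_smul_eq_of_ne_zero hzy (L.sub_mem hy hz)
    exact ⟨T₂ * T₁, mul_mem hT₂ hT₁, by rw [mul_smul, h₁, h₂]⟩
  · exact exists_mem_transvectionSubgroup_smul_eq_of_ne_zero hxy (L.sub_mem hy hx)

theorem exists_mem_transvectionSubgroup_inf_ker_smul_eq {L : Submodule K V} {e x y : V}
    (he : e ∈ L) (hx : x ∈ L) (hy : y ∈ L) (hex : ω e x = 1) (hey : ω e y = 1) :
    ∃ T ∈ transvectionSubgroup (L ⊓ LinearMap.ker (ω e)), T • x = y := by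
  have mem {u v : V} (hu : u ∈ L) (hv : v ∈ L) (huv : ω e u = ω e v) :
      v - u ∈ L ⊓ LinearMap.ker (ω e) :=
    ⟨L.sub_mem hv hu, by simp [huv]⟩
  by_cases hxy : ω x y = 0
  · -- pass through `x + e`, which pairs to `-1` with `x` and to `1` with `y`
    have h₁ : ω x (x + e) ≠ 0 := by simp [symplecticForm_swap e x, hex]
    have h₂ : ω (x + e) y ≠ 0 := by simp [hxy, hey]
    obtain ⟨T₁, hT₁, hT₁x⟩ := exists_mem_transvectionSubgroup_smul_eq_of_ne_zero h₁
      (mem hx (L.add_mem hx he) (by simp [hex]))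
    obtain ⟨T₂, hT₂, hT₂x⟩ := exists_mem_transvectionSubgroup_smul_eq_of_ne_zero h₂
      (mem (L.add_mem hx he) hy (by simp [hex, hey]))
    exact ⟨T₂ * T₁, mul_mem hT₂ hT₁, by rw [mul_smul, hT₁x, hT₂x]⟩
  · exact exists_mem_transvectionSubgroup_smul_eq_of_ne_zero hxy (mem hx hy (hex.trans hey.symm))

variable (g K) in
/-- The first `m` hyperbolic pairs `(eₐ, fₐ)` of the standard basis. -/
def firstPairs (m : ℕ) : Set V :=
  {x | ∃ a : Fin g, (a : ℕ) < m ∧ (x = Pi.single (Sum.inl a) 1 ∨ x = Pi.single (Sum.inr a) 1)}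

variable (K) in
def laterPairs (m : ℕ) : Submodule K V :=
  ⨅ x ∈ firstPairs g K m, LinearMap.ker (ω x)

theorem mem_laterPairs {m : ℕ} {w : V} :
    w ∈ laterPairs K m ↔ ∀ x ∈ firstPairs g K m, ω x w = 0 := by
  simp [laterPairs, Submodule.mem_iInf]

theorem single_mem_laterPairs {m : ℕ} {b : Fin g} (hb : m ≤ b) :
    (Pi.single (Sum.inl b) 1 : V) ∈ laterPairs K m ∧
      (Pi.single (Sum.inr b) 1 : V) ∈ laterPairs K m := by
  constructor <;> refine mem_laterPairs.mpr ?_ <;> rintro x ⟨a, ha, rfl | rfl⟩ <;>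
    simp [symplecticForm_single_inl, symplecticForm_single_inr, show a ≠ b by rintro rfl; omega]

theorem exists_mem_laterPairs_symplecticForm_ne_zero {m : ℕ} {v : V} (hv : v ∈ laterPairs K m)
    (hv0 : v ≠ 0) : ∃ w ∈ laterPairs K m, ω v w ≠ 0 := by
  obtain ⟨i, hi⟩ := Function.ne_iff.mp hv0
  cases i with
  | inl b =>
    have hb : m ≤ b := not_lt.mp fun hb => hi <| by
      simpa [symplecticForm_single_inr] using mem_laterPairs.mp hv _ ⟨b, hb, Or.inr rfl⟩
    exact ⟨_, (single_mem_laterPairs hb).2, by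
      rwa [symplecticForm_swap, symplecticForm_single_inr, neg_neg]⟩
  | inr b =>
    have hb : m ≤ b := not_lt.mp fun hb => hi <| by
      simpa [symplecticForm_single_inl] using mem_laterPairs.mp hv _ ⟨b, hb, Or.inl rfl⟩
    exact ⟨_, (single_mem_laterPairs hb).1, by
      rwa [symplecticForm_swap, symplecticForm_single_inl, neg_ne_zero]⟩

theorem smul_mem_laterPairs {m : ℕ} {S : 𝕄ˣ}
    (hS : S ∈ symplecticIsometries g K ⊓ fixingSubgroup 𝕄ˣ (firstPairs g K m)) {w : V}
    (hw : w ∈ laterPairs K m) : S • w ∈ laterPairs K m :=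
  mem_laterPairs.mpr fun x hx => by
    rw [← (mem_fixingSubgroup_iff 𝕄ˣ).mp hS.2 x hx, hS.1, mem_laterPairs.mp hw x hx]

theorem transvectionSubgroup_laterPairs_le (m : ℕ) :
    transvectionSubgroup (laterPairs K m) ≤ fixingSubgroup 𝕄ˣ (firstPairs g K m) :=
  transvectionSubgroup_le_fixingSubgroup fun x hx _ hw => mem_laterPairs.mp hw x hx

theorem exists_mem_transvectionSubgroup_mul_smul_eq {m : ℕ} {S : 𝕄ˣ}
    (hS : S ∈ symplecticIsometries g K ⊓ fixingSubgroup 𝕄ˣ (firstPairs g K m)) {e f : V}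
    (he : e ∈ laterPairs K m) (hf : f ∈ laterPairs K m) (hef : ω e f = 1) :
    ∃ T ∈ transvectionSubgroup (laterPairs K m), (T * S) • e = e ∧ (T * S) • f = f := by
  have hTS {T : 𝕄ˣ} (hT : T ∈ transvectionSubgroup (laterPairs K m)) :
      T * S ∈ symplecticIsometries g K ⊓ fixingSubgroup 𝕄ˣ (firstPairs g K m) :=
    mul_mem ⟨transvectionSubgroup_le_symplecticIsometries _ hT,
      transvectionSubgroup_laterPairs_le m hT⟩ hS
  have he0 : e ≠ 0 := by rintro rfl; simp at hef
  obtain ⟨T₁, hT₁, hT₁e⟩ := exists_mem_transvectionSubgroup_smul_eq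
    (fun _ => exists_mem_laterPairs_symplecticForm_ne_zero) (smul_mem_laterPairs hS he) he
    ((smul_ne_zero_iff_ne S).mpr he0) he0
  rw [← mul_smul] at hT₁e
  have hy : ω e ((T₁ * S) • f) = 1 := by rw [← hT₁e, (hTS hT₁).1, hef]
  obtain ⟨T₂, hT₂, hT₂f⟩ := exists_mem_transvectionSubgroup_inf_ker_smul_eq he
    (smul_mem_laterPairs (hTS hT₁) hf) hf hy hef
  have hT₂e : T₂ • e = e := (mem_fixingSubgroup_iff 𝕄ˣ).mp
    (transvectionSubgroup_le_fixingSubgroup (s := {e}) (by simp) hT₂) e rfl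
  refine ⟨T₂ * T₁, mul_mem (transvectionSubgroup_mono inf_le_left hT₂) hT₁, ?_, ?_⟩
  · rw [mul_assoc, mul_smul, hT₁e, hT₂e]
  · rw [mul_assoc, mul_smul, hT₂f]

theorem exists_mem_transvectionSubgroup_mul_mem_fixingSubgroup {m : ℕ} (hm : m < g) {S : 𝕄ˣ}
    (hS : S ∈ symplecticIsometries g K ⊓ fixingSubgroup 𝕄ˣ (firstPairs g K m)) :
    ∃ T ∈ transvectionSubgroup (laterPairs K m),
      T * S ∈ fixingSubgroup 𝕄ˣ (firstPairs g K (m + 1)) := by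
  obtain ⟨he, hf⟩ := single_mem_laterPairs (K := K) (b := ⟨m, hm⟩) le_rfl
  obtain ⟨T, hT, hTe, hTf⟩ := exists_mem_transvectionSubgroup_mul_smul_eq hS he hf
    (by simp [symplecticForm_single_inl])
  refine ⟨T, hT, (mem_fixingSubgroup_iff 𝕄ˣ).mpr ?_⟩
  rintro x ⟨a, ha, hx⟩
  rcases Nat.lt_succ_iff_lt_or_eq.mp ha with ha | rfl
  · exact (mem_fixingSubgroup_iff 𝕄ˣ).mp (mul_mem (transvectionSubgroup_laterPairs_le m hT) hS.2)
      x ⟨a, ha, hx⟩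
  · rcases hx with rfl | rfl
    exacts [hTe, hTf]

theorem symplecticIsometries_le {H : Subgroup 𝕄ˣ}
    (hH : ∀ w c, symplecticTransvection w c ∈ H) : symplecticIsometries g K ≤ H := by
  have key (m : ℕ) (hm : m ≤ g) :
      ∀ S ∈ symplecticIsometries g K ⊓ fixingSubgroup 𝕄ˣ (firstPairs g K m), S ∈ H := by
    refine Nat.decreasingInduction (motive := fun m _ => ∀ S ∈ symplecticIsometries g K ⊓
      fixingSubgroup 𝕄ˣ (firstPairs g K m), S ∈ H) (fun m hm ih S hS => ?_) (fun S hS => ?_) hm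
    · obtain ⟨T, hT, hTS⟩ := exists_mem_transvectionSubgroup_mul_mem_fixingSubgroup hm hS
      have hTH := transvectionSubgroup_le (fun w _ c => hH w c) hT
      simpa using H.mul_mem (H.inv_mem hTH) (ih (T * S) ⟨mul_mem
        (transvectionSubgroup_le_symplecticIsometries _ hT) hS.1, hTS⟩)
    · convert H.one_mem
      refine Units.ext (ext_of_mulVec_single fun i => ?_)
      rw [Units.val_one, one_mulVec]
      cases i with
      | inl a => exact (mem_fixingSubgroup_iff 𝕄ˣ).mp hS.2 _ ⟨a, a.isLt, Or.inl rfl⟩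
      | inr a => exact (mem_fixingSubgroup_iff 𝕄ˣ).mp hS.2 _ ⟨a, a.isLt, Or.inr rfl⟩
  exact fun S hS => key 0 (Nat.zero_le g) S ⟨hS, (mem_fixingSubgroup_iff 𝕄ˣ).mpr
    fun _ ⟨_, ha, _⟩ => absurd ha (Nat.not_lt_zero _)⟩

theorem eq_symplecticTransvection_of_val_eq_one_add_vecMulVec {A : 𝕄ˣ}
    (hA : A ∈ symplecticSimilitudes g K) (hdet : (A : 𝕄).det = 1)
    {v w : V} (hv : v ≠ 0) (hvw : (A : 𝕄) = 1 + vecMulVec v w) :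
    ∃ c, A = symplecticTransvection v c := by
  obtain ⟨γ, -, hγ⟩ := hA
  have hAx (x : V) : A • x = x + (w ⬝ᵥ x) • v := by
    change (A : 𝕄) *ᵥ x = _
    rw [hvw, add_mulVec, one_mulVec, vecMulVec_mulVec, op_smul_eq_smul]
  have hwv : w ⬝ᵥ v = 0 := by
    rw [hvw, vecMulVec_eq Unit, det_one_add_replicateCol_mul_replicateRow] at hdet
    simpa using hdet
  obtain ⟨x₀, hx₀⟩ : ∃ x₀, ω x₀ v ≠ 0 := by
    by_contra! h
    exact hv (symplecticForm_separatingLeft v fun x => by rw [symplecticForm_swap, h, neg_zero])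
  -- `A` fixes `v`, so pairing with `v` shows that the multiplier is `1`
  have hγ1 : γ = 1 := by
    have h := hγ x₀ v
    simp only [hAx, hwv, zero_smul, add_zero, map_add, map_smul, LinearMap.add_apply,
      LinearMap.smul_apply, symplecticForm_self, smul_eq_mul, mul_zero] at h
    exact (mul_right_cancel₀ hx₀ (h.symm.trans (one_mul _).symm))
  have hw (y : V) : w ⬝ᵥ y = w ⬝ᵥ x₀ / ω x₀ v * ω y v := by
    have h := hγ x₀ y
    simp only [hAx, hγ1, map_add, map_smul, LinearMap.add_apply, LinearMap.smul_apply,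
      symplecticForm_self, smul_eq_mul, symplecticForm_swap y v] at h
    field_simp
    linear_combination h
  exact ⟨w ⬝ᵥ x₀ / ω x₀ v, Matrix.units_ext_smul fun y => by
    rw [hAx, symplecticTransvection_smul, hw]⟩

theorem exists_eq_symplecticTransvection {A : 𝕄ˣ} (hA : A ∈ symplecticSimilitudes g K)
    (hdet : (A : 𝕄).det = 1)
    (hker : Module.finrank K (LinearMap.ker (Matrix.toLin' ((A : 𝕄) - 1))) = 2 * g - 1)
    (hg : 0 < g) : ∃ v ≠ 0, ∃ c ≠ 0, A = symplecticTransvection v c := by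
  have hrange : Module.finrank K (LinearMap.range (Matrix.toLin' ((A : 𝕄) - 1))) = 1 := by
    have := LinearMap.finrank_range_add_finrank_ker (Matrix.toLin' ((A : 𝕄) - 1))
    simp only [Module.finrank_fintype_fun_eq_card, Fintype.card_sum, Fintype.card_fin] at this
    omega
  obtain ⟨v, w, hv, hvw⟩ := Matrix.exists_eq_vecMulVec_of_finrank_range_eq_one hrange
  obtain ⟨c, rfl⟩ := eq_symplecticTransvection_of_val_eq_one_add_vecMulVec hA hdet hv
    (eq_add_of_sub_eq' hvw)
  refine ⟨v, hv, c, fun hc => ?_, rfl⟩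
  rw [hc, symplecticTransvection_zero_right, Units.val_one, sub_self, map_zero,
    LinearMap.range_zero, finrank_bot] at hrange
  exact zero_ne_one hrange

theorem exists_mem_symplecticForm_ne_zero {s : Set V} (hs : Submodule.span K s = ⊤) {x : V}
    (hx : x ≠ 0) : ∃ z ∈ s, ω x z ≠ 0 := by
  by_contra! h
  exact hx (symplecticForm_separatingLeft x fun y => LinearMap.BilinForm.apply_eq_zero_of_mem_span
    (s := {x}) (by simpa using h) (Submodule.subset_span rfl) (hs ▸ Submodule.mem_top))

def transvectionDirections (G : Subgroup 𝕄ˣ) : Set V :=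
  {v | ∀ c, symplecticTransvection v c ∈ G}

def transvectionGraph (G : Subgroup 𝕄ˣ) : SimpleGraph ↥(transvectionDirections G \ {0}) where
  Adj u v := ω u v ≠ 0
  symm := ⟨fun u v h => by rwa [symplecticForm_swap, neg_ne_zero]⟩
  loopless := ⟨fun u h => h (symplecticForm_self _)⟩

variable {G : Subgroup (Matrix (Fin g ⊕ Fin g) (Fin g ⊕ Fin g) K)ˣ}

local notation "𝒟" => transvectionDirections G

namespace transvectionDirections

theorem zero_mem : (0 : V) ∈ 𝒟 := fun c => by
  rw [symplecticTransvection_zero_left]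
  exact G.one_mem

theorem smul_mem {v : V} (hv : v ∈ 𝒟) (a : K) : a • v ∈ 𝒟 := fun c => by
  rw [symplecticTransvection_smul_left]
  exact hv _

theorem group_smul_mem (hG : G ≤ symplecticSimilitudes g K) {A : 𝕄ˣ} (hA : A ∈ G) {v : V}
    (hv : v ∈ 𝒟) : A • v ∈ 𝒟 := fun c => by
  obtain ⟨γ, hγ, hAγ⟩ := hG hA
  rw [← inv_mul_cancel_left₀ hγ c, ← mul_symplecticTransvection_mul_inv hγ hAγ]
  exact mul_mem (mul_mem hA (hv _)) (inv_mem hA)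

theorem smul_add_smul_mem (hG : G ≤ symplecticSimilitudes g K) {u v : V} (hu : u ∈ 𝒟)
    (hv : v ∈ 𝒟) (huv : ω u v ≠ 0) (a b : K) : a • u + b • v ∈ 𝒟 := by
  have key (t : K) : u + t • v ∈ 𝒟 := by
    have := group_smul_mem hG (hv (t / ω u v)) hu
    rwa [symplecticTransvection_smul, div_mul_cancel₀ _ huv] at this
  rcases eq_or_ne a 0 with rfl | ha
  · simpa using smul_mem hv b
  · convert smul_mem (key (b / a)) a using 1
    rw [smul_add, smul_smul, mul_div_cancel₀ _ ha]

theorem add_mem_of_symplecticForm_ne_zero (hG : G ≤ symplecticSimilitudes g K) {u v z : V}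
    (hu : u ∈ 𝒟) (hv : v ∈ 𝒟) (hz : z ∈ 𝒟) (huv : ω u v = 0) (huz : ω u z ≠ 0)
    (hvz : ω v z ≠ 0) (huvz : ω (u + v) z ≠ 0) : u + v ∈ 𝒟 := by
  have h₁ : u + z ∈ 𝒟 := by simpa using smul_add_smul_mem hG hu hz huz 1 1
  have h₂ : v - z ∈ 𝒟 := by
    simpa [sub_eq_add_neg] using smul_add_smul_mem hG hv hz hvz 1 (-1)
  have h₁₂ : ω (u + z) (v - z) = -ω (u + v) z := by
    simp only [map_add, map_sub, LinearMap.add_apply, huv,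
      symplecticForm_self, symplecticForm_swap z v]
    ring
  simpa using smul_add_smul_mem hG h₁ h₂ (by rwa [h₁₂, neg_ne_zero]) 1 1

theorem add_mem_of_symplecticForm_eq_zero (hG : G ≤ symplecticSimilitudes g K)
    (hK : 2 < Nat.card K) {u v z y : V} (hu : u ∈ 𝒟) (hv : v ∈ 𝒟) (hz : z ∈ 𝒟) (hy : y ∈ 𝒟)
    (huv : ω u v = 0) (huz : ω u z ≠ 0) (hvz : ω v z ≠ 0) (huy : ω u y = 0)
    (hvy : ω v y ≠ 0) : u + v ∈ 𝒟 := by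
  -- `z' = z + α • v + t • y` pairs with `u` as `z` does; `t` makes it pair with `v` and `u + v`
  set α := (1 - ω z y) / ω v y
  have hx : z + α • v ∈ 𝒟 := by
    simpa using smul_add_smul_mem hG hz hv (by rwa [symplecticForm_swap, neg_ne_zero]) 1 α
  have hxy : ω (z + α • v) y = 1 := by
    simp only [α, map_add, map_smul, LinearMap.add_apply, LinearMap.smul_apply, smul_eq_mul]
    field_simp
    ring
  obtain ⟨t, ht₁, ht₂⟩ := exists_add_mul_ne_zero_and_add_mul_ne_zero hK (a := ω v z)
    (c := ω u z + ω v z) (Or.inr hvy) (Or.inr hvy)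
  have hz' : z + α • v + t • y ∈ 𝒟 := by
    simpa using smul_add_smul_mem hG hx hy (by rw [hxy]; exact one_ne_zero) 1 t
  refine add_mem_of_symplecticForm_ne_zero hG hu hv hz' huv ?_ ?_ ?_
  · simpa [huv, huy] using huz
  · simpa using ht₁
  · simpa [huv, huy, add_assoc] using ht₂

theorem exists_common_neighbor (hG : G ≤ symplecticSimilitudes g K) (hK : 2 < Nat.card K)
    (hspan : Submodule.span K 𝒟 = ⊤) {u v : ↥(𝒟 \ {0})}
    (h : (transvectionGraph G).Reachable u v) : ∃ z ∈ 𝒟, ω u z ≠ 0 ∧ ω v z ≠ 0 := by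
  obtain ⟨p⟩ := h
  induction p with
  | @nil x =>
    obtain ⟨z, hz, hxz⟩ := exists_mem_symplecticForm_ne_zero hspan x.2.2
    exact ⟨z, hz, hxz, hxz⟩
  | @cons x w y hxw p ih =>
    obtain ⟨z, hz, hwz, hyz⟩ := ih
    obtain ⟨s, hs₁, hs₂⟩ := exists_add_mul_ne_zero_and_add_mul_ne_zero hK (a := ω x z)
      (c := ω y z) (Or.inr hxw) (Or.inl hyz)
    refine ⟨z + s • w, ?_, by simpa using hs₁, by simpa using hs₂⟩
    simpa using smul_add_smul_mem hG hz w.2.1 (by rwa [symplecticForm_swap, neg_ne_zero]) 1 s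

theorem add_mem (hG : G ≤ symplecticSimilitudes g K) (hK : 2 < Nat.card K)
    (hspan : Submodule.span K 𝒟 = ⊤) (hconn : (transvectionGraph G).Preconnected) {u v : V}
    (hu : u ∈ 𝒟) (hv : v ∈ 𝒟) : u + v ∈ 𝒟 := by
  rcases eq_or_ne u 0 with rfl | hu0
  · simpa using hv
  rcases eq_or_ne v 0 with rfl | hv0
  · simpa using hu
  rcases eq_or_ne (u + v) 0 with huv0 | huv0
  · exact huv0 ▸ zero_mem
  rcases ne_or_eq (ω u v) 0 with huv | huv
  · simpa using smul_add_smul_mem hG hu hv huv 1 1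
  obtain ⟨z, hz, huz, hvz⟩ := exists_common_neighbor hG hK hspan (hconn ⟨u, hu, hu0⟩ ⟨v, hv, hv0⟩)
  obtain ⟨y, hy, huvy⟩ := exists_mem_symplecticForm_ne_zero hspan huv0
  rw [map_add, LinearMap.add_apply] at huvy
  by_cases huy : ω u y = 0
  · exact add_mem_of_symplecticForm_eq_zero hG hK hu hv hz hy huv huz hvz huy
      (by simpa [huy] using huvy)
  by_cases hvy : ω v y = 0
  · rw [add_comm]
    exact add_mem_of_symplecticForm_eq_zero hG hK hv hu hz hy
      (by rw [symplecticForm_swap, huv, neg_zero]) hvz huz hvy huy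
  · exact add_mem_of_symplecticForm_ne_zero hG hu hv hy huv huy hvy (by simpa using huvy)

theorem eq_univ (hG : G ≤ symplecticSimilitudes g K) (hK : 2 < Nat.card K)
    (hspan : Submodule.span K 𝒟 = ⊤) (hconn : (transvectionGraph G).Preconnected) :
    𝒟 = Set.univ := by
  let W : Submodule K V :=
    { carrier := 𝒟
      add_mem' := add_mem hG hK hspan hconn
      zero_mem' := zero_mem
      smul_mem' := fun a _ hv => smul_mem hv a }
  have hW : W = ⊤ := top_unique (hspan ▸ Submodule.span_le.mpr fun _ hv => hv)
  exact Set.eq_univ_of_forall fun x => (hW ▸ Submodule.mem_top : x ∈ W)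

theorem span_eq_top (hG : G ≤ symplecticSimilitudes g K)
    (hirr : ∀ W : Submodule K V, (∀ A ∈ G, ∀ v ∈ W, A • v ∈ W) → W = ⊥ ∨ W = ⊤) {v : V}
    (hv : v ∈ 𝒟) (hv0 : v ≠ 0) : Submodule.span K 𝒟 = ⊤ := by
  refine (hirr _ fun A hA x hx => ?_).resolve_left fun h => hv0 ?_
  · induction hx using Submodule.span_induction with
    | mem x hx => exact Submodule.subset_span (group_smul_mem hG hA hx)
    | zero => simp
    | add x y _ _ hx hy => simpa using (Submodule.span K 𝒟).add_mem hx hy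
    | smul a x _ hx => simpa [smul_comm A a] using Submodule.smul_mem _ a hx
  · simpa [h] using Submodule.subset_span (R := K) hv

end transvectionDirections

theorem mem_transvectionDirections_of_symplecticTransvection_mem {p : ℕ} [Fact p.Prime]
    {G : Subgroup (Matrix (Fin g ⊕ Fin g) (Fin g ⊕ Fin g) (ZMod p))ˣ} {v : Fin g ⊕ Fin g → ZMod p}
    {c : ZMod p} (hc : c ≠ 0) (h : symplecticTransvection v c ∈ G) :
    v ∈ transvectionDirections G := fun d => by
  have := pow_mem h (d / c).val
  rwa [symplecticTransvection_pow, ZMod.natCast_zmod_val, div_mul_cancel₀ _ hc] at this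

namespace transvectionGraph

def iso (hG : G ≤ symplecticSimilitudes g K) {A : 𝕄ˣ} (hA : A ∈ G) :
    transvectionGraph G ≃g transvectionGraph G where
  toFun u := ⟨A • u.1, transvectionDirections.group_smul_mem hG hA u.2.1,
    (smul_ne_zero_iff_ne A).mpr u.2.2⟩
  invFun u := ⟨A⁻¹ • u.1, transvectionDirections.group_smul_mem hG (inv_mem hA) u.2.1,
    (smul_ne_zero_iff_ne A⁻¹).mpr u.2.2⟩
  left_inv u := Subtype.ext (inv_smul_smul A u.1)
  right_inv u := Subtype.ext (smul_inv_smul A u.1)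
  map_rel_iff' := by
    obtain ⟨γ, hγ, hAγ⟩ := hG hA
    simp [transvectionGraph, hAγ, hγ]

def componentSpan (c : (transvectionGraph G).ConnectedComponent) : Submodule K V :=
  Submodule.span K (Subtype.val '' c.supp)

theorem componentSpan_orthogonal {c c' : (transvectionGraph G).ConnectedComponent} (h : c ≠ c')
    {x y : V} (hx : x ∈ componentSpan c) (hy : y ∈ componentSpan c') : ω x y = 0 := by
  refine LinearMap.BilinForm.apply_eq_zero_of_mem_span ?_ hx hy
  rintro _ ⟨u, rfl, rfl⟩ _ ⟨v, hv, rfl⟩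
  by_contra huv
  exact h ((SimpleGraph.ConnectedComponent.connectedComponentMk_eq_of_adj huv).trans hv)

theorem iSup_componentSpan (hspan : Submodule.span K 𝒟 = ⊤) :
    ⨆ c : (transvectionGraph G).ConnectedComponent, componentSpan c = ⊤ := by
  simp only [componentSpan]
  rw [← Submodule.span_iUnion, ← Set.image_iUnion,
    SimpleGraph.iUnion_connectedComponentSupp, Set.image_univ, Subtype.range_coe,
    Submodule.span_sdiff_singleton_zero, hspan]

theorem exists_map_componentSpan (hG : G ≤ symplecticSimilitudes g K) {A : 𝕄ˣ} (hA : A ∈ G)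
    (c : (transvectionGraph G).ConnectedComponent) :
    ∃ c' : (transvectionGraph G).ConnectedComponent,
      (componentSpan c).map (Matrix.toLin' (A : 𝕄)) = componentSpan c' := by
  set φ := iso hG hA
  induction c using SimpleGraph.ConnectedComponent.ind with | h u => ?_
  refine ⟨(transvectionGraph G).connectedComponentMk (φ u), ?_⟩
  simp only [componentSpan]
  rw [Submodule.map_span, Set.image_image]
  congr 1
  ext x
  simp only [Set.mem_image, SimpleGraph.ConnectedComponent.mem_supp_iff,
    SimpleGraph.ConnectedComponent.eq]
  constructor
  · rintro ⟨w, hw, rfl⟩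
    exact ⟨φ w, SimpleGraph.Iso.reachable_iff.mpr hw, rfl⟩
  · rintro ⟨w, hw, rfl⟩
    exact ⟨φ.symm w, SimpleGraph.Iso.symm_apply_reachable.mpr hw, smul_inv_smul A (w : V)⟩

theorem exists_imprimitivity_of_not_preconnected [Finite K] (hG : G ≤ symplecticSimilitudes g K)
    (hspan : Submodule.span K 𝒟 = ⊤) (hconn : ¬ (transvectionGraph G).Preconnected) :
    ∃ (r : ℕ) (_ : 2 ≤ r) (W : Fin r → Submodule K V), (∀ i, W i ≠ ⊥) ∧ (⨆ i, W i) = ⊤ ∧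
      (∀ i, W i ⊓ (⨆ j, ⨆ (_ : j ≠ i), W j) = ⊥) ∧
      (∀ A ∈ G, ∀ i, ∃ j, Submodule.map (Matrix.toLin' (A : 𝕄)) (W i) = W j) := by
  have hr : 1 < Nat.card (transvectionGraph G).ConnectedComponent := by
    simp only [SimpleGraph.Preconnected, not_forall] at hconn
    obtain ⟨u, v, huv⟩ := hconn
    exact Finite.one_lt_card_iff_nontrivial.mpr
      ⟨_, _, mt SimpleGraph.ConnectedComponent.exact huv⟩
  set e := Finite.equivFin (transvectionGraph G).ConnectedComponent
  have hind : iSupIndep (componentSpan (G := G)) :=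
    LinearMap.BilinForm.iSupIndep_of_pairwise_orthogonal symplecticForm_separatingLeft
      (fun c c' h x hx y hy => componentSpan_orthogonal h hx hy) (iSup_componentSpan hspan)
  refine ⟨_, hr, fun i => componentSpan (e.symm i), fun i => ?_,
    (e.symm.iSup_comp (g := componentSpan)).trans (iSup_componentSpan hspan),
    fun i => (iSupIndep_def.mp (hind.comp e.symm.injective) i).eq_bot, fun A hA i => ?_⟩
  · obtain ⟨u, hu⟩ := (e.symm i).nonempty_supp
    exact (Submodule.ne_bot_iff _).mpr ⟨u, Submodule.subset_span ⟨u, hu, rfl⟩, u.2.2⟩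
  · obtain ⟨c', hc'⟩ := exists_map_componentSpan hG hA (e.symm i)
    exact ⟨e c', by simpa using hc'⟩

end transvectionGraph

end Field

/-- Let `g ≥ 2` and let `ℓ` be an odd prime.  If `G` is a subgroup of `GSp_{2g}(F_ℓ)`
containing a transvection and acting irreducibly and primitively on `V = F_ℓ^{2g}`,
then `G` contains `Sp_{2g}(F_ℓ)`. -/
theorem contains_Sp_of_transvection_irreducible_primitive
    (g : ℕ) (hg : 2 ≤ g) (ℓ : ℕ) [Fact ℓ.Prime] (hodd : ℓ ≠ 2)
    (G : Subgroup (Matrix (Fin g ⊕ Fin g) (Fin g ⊕ Fin g) (ZMod ℓ))ˣ)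
    -- `G` consists of symplectic similitudes
    (hGSp : ∀ A ∈ G, ∃ γ : ZMod ℓ, γ ≠ 0 ∧
      (A : Matrix (Fin g ⊕ Fin g) (Fin g ⊕ Fin g) (ZMod ℓ))ᵀ * Jmat g (ZMod ℓ) * A
        = γ • Jmat g (ZMod ℓ))
    -- `G` contains a transvection
    (htrans : ∃ A ∈ G, (A : Matrix (Fin g ⊕ Fin g) (Fin g ⊕ Fin g) (ZMod ℓ)).det = 1 ∧
      Module.finrank (ZMod ℓ)
        (LinearMap.ker (Matrix.toLin'
          ((A : Matrix (Fin g ⊕ Fin g) (Fin g ⊕ Fin g) (ZMod ℓ)) - 1))) = 2 * g - 1)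
    -- the action of `G` on `V` is irreducible
    (hirr : ∀ W : Submodule (ZMod ℓ) (Fin g ⊕ Fin g → ZMod ℓ),
      (∀ A ∈ G, ∀ v ∈ W, (A : Matrix (Fin g ⊕ Fin g) (Fin g ⊕ Fin g) (ZMod ℓ)).mulVec v ∈ W) →
      W = ⊥ ∨ W = ⊤)
    -- the action of `G` on `V` is primitive
    (hprim : ¬ ∃ (r : ℕ) (_ : 2 ≤ r)
      (W : Fin r → Submodule (ZMod ℓ) (Fin g ⊕ Fin g → ZMod ℓ)),
      (∀ i, W i ≠ ⊥) ∧ (⨆ i, W i) = ⊤ ∧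
      (∀ i, W i ⊓ (⨆ j, ⨆ (_ : j ≠ i), W j) = ⊥) ∧
      (∀ A ∈ G, ∀ i, ∃ j,
        Submodule.map
          (Matrix.toLin' (A : Matrix (Fin g ⊕ Fin g) (Fin g ⊕ Fin g) (ZMod ℓ))) (W i) = W j)) :
    ∀ A : (Matrix (Fin g ⊕ Fin g) (Fin g ⊕ Fin g) (ZMod ℓ))ˣ,
      (A : Matrix (Fin g ⊕ Fin g) (Fin g ⊕ Fin g) (ZMod ℓ))ᵀ * Jmat g (ZMod ℓ) * A
        = Jmat g (ZMod ℓ) → A ∈ G := by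
  have hG : G ≤ symplecticSimilitudes g (ZMod ℓ) := fun A hA =>
    mem_symplecticSimilitudes_iff.mpr (hGSp A hA)
  have hK : 2 < Nat.card (ZMod ℓ) := by
    have := (Fact.out : ℓ.Prime).two_le
    rw [Nat.card_zmod]
    omega
  obtain ⟨_, hA₀, hdet, hker⟩ := htrans
  obtain ⟨v, hv, c, hc, rfl⟩ := exists_eq_symplecticTransvection (hG hA₀) hdet hker (by omega)
  have hspan := transvectionDirections.span_eq_top hG hirr
    (mem_transvectionDirections_of_symplecticTransvection_mem hc hA₀) hv
  have hconn : (transvectionGraph G).Preconnected := by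
    by_contra h
    exact hprim (transvectionGraph.exists_imprimitivity_of_not_preconnected hG hspan h)
  have hall := transvectionDirections.eq_univ hG hK hspan hconn
  exact fun A hA => symplecticIsometries_le (fun w => Set.eq_univ_iff_forall.mp hall w)
    (mem_symplecticIsometries_iff.mpr hA)
end

section
/- Let K be an algebraically closed field whose characteristic is not 7, 11, or 83 (characteristic 0 is allowed). Let f(x,y,z) = x³y − x²y² + x²z² + xy³ − xyz² − xz³ − y⁴ + y³z − y²z² − yz³. Then the only common zero in K³ of f and its three partial derivatives ∂f/∂x, ∂f/∂y, ∂f/∂z is (0,0,0); in other words, the plane quartic curve f = 0 in ℙ²_K is smooth. -/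
open MvPolynomial

/-- The quartic `f(x,y,z) = x³y − x²y² + x²z² + xy³ − xyz² − xz³ − y⁴ + y³z − y²z² − yz³`. -/
noncomputable def quarticF (K : Type) [CommRing K] : MvPolynomial (Fin 3) K :=
  X 0 ^ 3 * X 1 - X 0 ^ 2 * X 1 ^ 2 + X 0 ^ 2 * X 2 ^ 2 + X 0 * X 1 ^ 3
    - X 0 * X 1 * X 2 ^ 2 - X 0 * X 2 ^ 3 - X 1 ^ 4 + X 1 ^ 3 * X 2
    - X 1 ^ 2 * X 2 ^ 2 - X 1 * X 2 ^ 3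

/-- Over an algebraically closed field of characteristic different from `7`, `11` and `83`,
the only common zero of `f` and its partial derivatives is the origin; i.e. the plane
quartic `f = 0` is smooth. -/
theorem quartic_smooth (K : Type) [Field K] [IsAlgClosed K]
    (h7 : ringChar K ≠ 7) (h11 : ringChar K ≠ 11) (h83 : ringChar K ≠ 83)
    (v : Fin 3 → K)
    (hf : eval v (quarticF K) = 0)
    (hd : ∀ i : Fin 3, eval v (pderiv i (quarticF K)) = 0) :
    v = 0 := by
  have h0 := hd 0
  have h1 := hd 1
  have h2 := hd 2
  simp only [quarticF, map_add, map_sub, pderiv_mul, pderiv_pow, pderiv_X, Pi.single_apply,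
    Fin.isValue, map_mul, map_pow, eval_X, map_one, map_ofNat, map_natCast, Nat.cast_ofNat,
    show ((2:Fin 3) = 0) = False by simp, show ((2:Fin 3) = 1) = False by simp,
    show ((0:Fin 3) = 1) = False by simp, show ((1:Fin 3) = 0) = False by simp,
    show ((0:Fin 3) = 2) = False by simp, show ((1:Fin 3) = 2) = False by simp,
    if_true, if_false, ite_true, ite_false, add_zero, zero_add, sub_zero, mul_zero,
    zero_mul] at h0 h1 h2 hf
  have e0 : 3*(v 0)^2*(v 1) - 2*(v 0)*(v 1)^2 + 2*(v 0)*(v 2)^2 + (v 1)^3 - (v 1)*(v 2)^2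
      - (v 2)^3 = 0 := by linear_combination h0
  have e1 : (v 0)^3 - 2*(v 0)^2*(v 1) + 3*(v 0)*(v 1)^2 - (v 0)*(v 2)^2 - 4*(v 1)^3
      + 3*(v 1)^2*(v 2) - 2*(v 1)*(v 2)^2 - (v 2)^3 = 0 := by linear_combination h1
  have e2 : 2*(v 0)^2*(v 2) - 2*(v 0)*(v 1)*(v 2) - 3*(v 0)*(v 2)^2 + (v 1)^3
      - 2*(v 1)^2*(v 2) - 3*(v 1)*(v 2)^2 = 0 := by linear_combination h2
  have ef : (v 0)^3*(v 1) - (v 0)^2*(v 1)^2 + (v 0)^2*(v 2)^2 + (v 0)*(v 1)^3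
      - (v 0)*(v 1)*(v 2)^2 - (v 0)*(v 2)^3 - (v 1)^4 + (v 1)^3*(v 2) - (v 1)^2*(v 2)^2
      - (v 1)*(v 2)^3 = 0 := by linear_combination hf
  -- 6391 = 7 * 11 * 83 is nonzero in K
  have hchar : (6391 : K) ≠ 0 := by
    intro h
    have hdvd : ringChar K ∣ 6391 := (CharP.cast_eq_zero_iff K (ringChar K) 6391).mp (by exact_mod_cast h)
    rcases CharP.char_is_prime_or_zero K (ringChar K) with hp | hp
    · have h7' : (7:ℕ).Prime := by norm_num
      have h11' : (11:ℕ).Prime := by norm_num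
      have h83' : (83:ℕ).Prime := by norm_num
      have : ringChar K ∣ 7 * (11 * 83) := by norm_num at hdvd ⊢; exact hdvd
      rcases (Nat.Prime.dvd_mul hp).mp this with h | h
      · exact h7 ((Nat.prime_dvd_prime_iff_eq hp h7').mp h)
      · rcases (Nat.Prime.dvd_mul hp).mp h with h | h
        · exact h11 ((Nat.prime_dvd_prime_iff_eq hp h11').mp h)
        · exact h83 ((Nat.prime_dvd_prime_iff_eq hp h83').mp h)
    · rw [hp] at hdvd
      simp at hdvd
  have hx : v 0 = 0 := by
    have key : (6391 : K) * (v 0)^8 = 0 := by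
      linear_combination (norm := ring1)
        ((963298366)*(v 2)^4 + (-968737173)*(v 1)*(v 2)^3 + (1026442985)*(v 1)^2*(v 2)^2 + (928576721)*(v 1)^3*(v 2) + (-684823631)*(v 1)^4 + (-3573836092)*(v 0)*(v 2)^3 + (-5736156795)*(v 0)*(v 1)*(v 2)^2 + (-7282390635)*(v 0)*(v 1)^2*(v 2) + (928905298)*(v 0)*(v 1)^3 + (1152838480)*(v 0)^2*(v 2)^2 + (6480557980)*(v 0)^2*(v 1)*(v 2) + (5268576448)*(v 0)^2*(v 1)^2 + (-833375625)*(v 0)^3*(v 2) + (1169944860)*(v 0)^3*(v 1) + (369168929)*(v 0)^4) * ef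
        + ((479106432)*(v 2)^5 + (306761726)*(v 1)*(v 2)^4 + (-659309538)*(v 1)^2*(v 2)^3 + (582423986)*(v 1)^3*(v 2)^2 + (878669098)*(v 1)^4*(v 2) + (-1057154072)*(v 1)^5 + (-468482508)*(v 0)*(v 2)^4 + (1731595046)*(v 0)*(v 1)*(v 2)^3 + (1547057245)*(v 0)*(v 1)^2*(v 2)^2 + (2620112789)*(v 0)*(v 1)^3*(v 2) + (-1197824979)*(v 0)*(v 1)^4 + (2161097178)*(v 0)^2*(v 2)^3 + (5870400875)*(v 0)^2*(v 1)*(v 2)^2 + (5141487117)*(v 0)^2*(v 1)^2*(v 2) + (-9307170)*(v 0)^2*(v 1)^3 + (-1380155474)*(v 0)^3*(v 2)^2 + (-4720201284)*(v 0)^3*(v 1)*(v 2) + (-1519313950)*(v 0)^3*(v 1)^2 + (250445555)*(v 0)^4*(v 2) + (-123052049)*(v 0)^5) * e0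
        + ((-479106432)*(v 2)^5 + (-790953660)*(v 1)*(v 2)^4 + (502574643)*(v 1)^2*(v 2)^3 + (-369848034)*(v 1)^4*(v 2) + (942503438)*(v 0)*(v 2)^4 + (1835632597)*(v 0)*(v 1)*(v 2)^3 + (913154025)*(v 0)*(v 1)^2*(v 2)^2 + (1906376985)*(v 0)*(v 1)^3*(v 2) + (-174311441)*(v 0)*(v 1)^4 + (496568826)*(v 0)^2*(v 2)^3 + (2186871184)*(v 0)^2*(v 1)*(v 2)^2 + (-1921598938)*(v 0)^2*(v 1)^3 + (-1046899202)*(v 0)^3*(v 1)^2 + (-82038960)*(v 0)^4*(v 2) + (6391)*(v 0)^5) * e1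
        + ((372330441)*(v 1)^5 + (-2723494482)*(v 0)^2*(v 1)^3 + (3837849012)*(v 0)^3*(v 1)^2 + (41019480)*(v 0)^5) * e2
    have : (v 0)^8 = 0 := by
      rcases mul_eq_zero.mp key with h | h
      · exact absurd h hchar
      · exact h
    exact pow_eq_zero_iff (by norm_num) |>.mp this
  have hy : v 1 = 0 := by
    have key : (6391 : K) * (v 1)^8 = 0 := by
      linear_combination (norm := ring1)
        ((9147580)*(v 2)^4 + (28338605)*(v 1)*(v 2)^3 + (33473901)*(v 1)^2*(v 2)^2 + (-1881290)*(v 1)^3*(v 2) + (2126518)*(v 1)^4 + (-23347657)*(v 0)*(v 2)^3 + (-18699561)*(v 0)*(v 1)*(v 2)^2 + (-1557432)*(v 0)*(v 1)^2*(v 2) + (5514935)*(v 0)*(v 1)^3 + (31545454)*(v 0)^2*(v 2)^2 + (-5105640)*(v 0)^2*(v 1)*(v 2) + (-35945314)*(v 0)^2*(v 1)^2 + (-2990080)*(v 0)^3*(v 2) + (36132194)*(v 0)^3*(v 1) + (-1681920)*(v 0)^4) * ef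
        + ((7506219)*(v 2)^5 + (7899363)*(v 1)*(v 2)^4 + (-44351078)*(v 1)^2*(v 2)^3 + (13318473)*(v 1)^3*(v 2)^2 + (18835726)*(v 1)^4*(v 2) + (-35891074)*(v 1)^5 + (171859)*(v 0)*(v 2)^4 + (-16323733)*(v 0)*(v 1)*(v 2)^3 + (-54711267)*(v 0)*(v 1)^2*(v 2)^2 + (31015579)*(v 0)*(v 1)^3*(v 2) + (-11132283)*(v 0)*(v 1)^4 + (19639737)*(v 0)^2*(v 2)^3 + (23129901)*(v 0)^2*(v 1)*(v 2)^2 + (427464)*(v 0)^2*(v 1)^2*(v 2) + (7715454)*(v 0)^2*(v 1)^3 + (-23119856)*(v 0)^3*(v 2)^2 + (954360)*(v 0)^3*(v 1)*(v 2) + (1121280)*(v 0)^4*(v 2) + (560640)*(v 0)^5) * e0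
        + ((-7506219)*(v 2)^5 + (-9540724)*(v 1)*(v 2)^4 + (-4471679)*(v 1)^2*(v 2)^3 + (-3780040)*(v 1)^3*(v 2)^2 + (-4348483)*(v 1)^4*(v 2) + (-7162100)*(v 1)^5 + (13199218)*(v 0)*(v 2)^4 + (954360)*(v 0)*(v 1)*(v 2)^3 + (-32802926)*(v 0)*(v 1)^2*(v 2)^2 + (7657777)*(v 0)*(v 1)^4 + (-36692834)*(v 0)^3*(v 1)^2 + (373760)*(v 0)^4*(v 2)) * e1
        + ((9375583)*(v 1)^5 + (-5144040)*(v 0)*(v 1)^4 + (1061940)*(v 0)^2*(v 1)^3 + (-186880)*(v 0)^5) * e2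
    have : (v 1)^8 = 0 := by
      rcases mul_eq_zero.mp key with h | h
      · exact absurd h hchar
      · exact h
    exact pow_eq_zero_iff (by norm_num) |>.mp this
  have hz : v 2 = 0 := by
    have key : (6391 : K) * (v 2)^8 = 0 := by
      linear_combination (norm := ring1)
        ((31214886018)*(v 2)^4 + (131331559505)*(v 1)*(v 2)^3 + (69372223686)*(v 1)^2*(v 2)^2 + (-26388616270)*(v 1)^3*(v 2) + (16879484306)*(v 1)^4 + (-4037588655)*(v 0)*(v 2)^3 + (-101760838601)*(v 0)*(v 1)*(v 2)^2 + (-69460325648)*(v 0)*(v 1)^2*(v 2) + (-20862850086)*(v 0)*(v 1)^3 + (1333308836)*(v 0)^2*(v 2)^2 + (-14449117632)*(v 0)^2*(v 1)*(v 2) + (27718340350)*(v 0)^2*(v 1)^2 + (-19265490176)*(v 0)^3*(v 2) + (-26514247214)*(v 0)^3*(v 1) + (-10836838224)*(v 0)^4) * ef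
        + ((-5333262218)*(v 2)^5 + (-25271196834)*(v 1)*(v 2)^4 + (-41273098105)*(v 1)^2*(v 2)^3 + (-43445242598)*(v 1)^3*(v 2)^2 + (-4134510040)*(v 1)^4*(v 2) + (23202991090)*(v 1)^5 + (-26685878921)*(v 0)*(v 2)^4 + (-96713407735)*(v 0)*(v 1)*(v 2)^3 + (-28711867417)*(v 0)*(v 1)^2*(v 2)^2 + (-2457398720)*(v 0)*(v 1)^3*(v 2) + (-2332425996)*(v 0)*(v 1)^4 + (2409504191)*(v 0)^2*(v 2)^3 + (46611510496)*(v 0)^2*(v 1)*(v 2)^2 + (19847688096)*(v 0)^2*(v 1)^2*(v 2) + (-566095182)*(v 0)^2*(v 1)^3 + (4781366718)*(v 0)^3*(v 2)^2 + (7224558816)*(v 0)^4*(v 2) + (3612279408)*(v 0)^5) * e0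
        + ((5333255827)*(v 2)^5 + (-11276938620)*(v 1)*(v 2)^4 + (-57448505863)*(v 1)^2*(v 2)^3 + (-30370646130)*(v 1)^3*(v 2)^2 + (12945151026)*(v 1)^4*(v 2) + (-20528787360)*(v 0)*(v 2)^4 + (-33317450540)*(v 0)*(v 1)*(v 2)^3 + (37137059787)*(v 0)*(v 1)^2*(v 2)^2 + (27978658400)*(v 0)*(v 1)^3*(v 2) + (-2749018446)*(v 0)*(v 1)^4 + (22901967806)*(v 0)^3*(v 1)^2 + (2408186272)*(v 0)^4*(v 2)) * e1
        + ((-6323506784)*(v 1)^5 + (40658741640)*(v 0)*(v 1)^3*(v 2) + (-56853363600)*(v 0)^2*(v 1)^2*(v 2) + (-1204093136)*(v 0)^5) * e2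
    have : (v 2)^8 = 0 := by
      rcases mul_eq_zero.mp key with h | h
      · exact absurd h hchar
      · exact h
    exact pow_eq_zero_iff (by norm_num) |>.mp this
  funext i
  fin_cases i
  · exact hx
  · exact hy
  · exact hz
end

section
/- Let p ∈ {7, 11} and let K be an algebraically closed field of characteristic p. Let f(x,y,z) = x³y − x²y² + x²z² + xy³ − xyz² − xz³ − y⁴ + y³z − y²z² − yz³ and define g(x,y,z) = f(x − 69y − 1389z, y − 64z, z). Then the set of nonzero triples (x,y,z) ∈ K³ at which g and its three partial derivatives g_x, g_y, g_z all vanish is exactly the set of nonzero scalar multiples of (0, 0, 1); i.e., the plane quartic g = 0 over K has (0:0:1) as its unique singular point. -/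
open MvPolynomial

/-- The quartic `g(x,y,z) = f(x − 69y − 1389z, y − 64z, z)`. -/
noncomputable def quarticG (K : Type) [CommRing K] : MvPolynomial (Fin 3) K :=
  aeval ![X 0 - 69 * X 1 - 1389 * X 2, X 1 - 64 * X 2, X 2] (quarticF K)

private lemma pdnum {K : Type} [CommRing K] (i : Fin 3) (n : ℕ) [n.AtLeastTwo] :
    pderiv i (no_index (OfNat.ofNat n) : MvPolynomial (Fin 3) K) = 0 := by
  rw [← map_ofNat (C : K →+* MvPolynomial (Fin 3) K) n]; exact pderiv_C

set_option maxHeartbeats 4000000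

private lemma evalG {K : Type} [CommRing K] (v : Fin 3 → K) :
    eval v (quarticG K) = v 0^3*v 1 - 64*v 0^3*v 2 - 208*v 0^2*v 1^2 + 9209*v 0^2*v 1*v 2 + 262593*v 0^2*v 2^2 + 14422*v 0*v 1^3 - 354144*v 0*v 1^2*v 2 - 30793168*v 0*v 1*v 2^2 - 359315803*v 0*v 2^3 - 333340*v 1^4 + 1615331*v 1^3*v 2 + 872835917*v 1^2*v 2^2 + 22343910974*v 1*v 2^3 + 163955337238*v 2^4 := by
  simp only [quarticG, quarticF, map_sub, map_add, map_mul, map_pow, aeval_X, Matrix.cons_val_zero, Matrix.cons_val_one, Matrix.head_cons, Matrix.cons_val_two, Matrix.tail_cons, map_ofNat, pderiv_mul, pderiv_pow, pderiv_X_self, pderiv_X_of_ne (show (1:Fin 3) ≠ 0 by decide), pderiv_X_of_ne (show (2:Fin 3) ≠ 0 by decide), pderiv_X_of_ne (show (0:Fin 3) ≠ 1 by decide), pderiv_X_of_ne (show (2:Fin 3) ≠ 1 by decide), pderiv_X_of_ne (show (0:Fin 3) ≠ 2 by decide), pderiv_X_of_ne (show (1:Fin 3) ≠ 2 by decide), pderiv_one,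 pdnum, eval_X, eval_mul, eval_add, eval_sub, eval_pow, eval_ofNat, map_one, map_zero, map_natCast, Nat.cast_ofNat]
  ring

private lemma evalGx {K : Type} [CommRing K] (v : Fin 3 → K) :
    eval v (pderiv 0 (quarticG K)) = 3*v 0^2*v 1 - 192*v 0^2*v 2 - 416*v 0*v 1^2 + 18418*v 0*v 1*v 2 + 525186*v 0*v 2^2 + 14422*v 1^3 - 354144*v 1^2*v 2 - 30793168*v 1*v 2^2 - 359315803*v 2^3 := by
  simp only [quarticG, quarticF, map_sub, map_add, map_mul, map_pow, aeval_X, Matrix.cons_val_zero, Matrix.cons_val_one, Matrix.head_cons, Matrix.cons_val_two, Matrix.tail_cons, map_ofNat, pderiv_mul, pderiv_pow, pderiv_X_self, pderiv_X_of_ne (show (1:Fin 3) ≠ 0 by decide), pderiv_X_of_ne (show (2:Fin 3) ≠ 0 by decide), pderiv_X_of_ne (show (0:Fin 3) ≠ 1 by decide), pderiv_X_of_ne (show (2:Fin 3) ≠ 1 by decide), pderiv_X_of_ne (show (0:Fin 3) ≠ 2 by decide), pderiv_X_of_ne (show (1:Fin 3) ≠ 2 by decide), pderiv_one, pdnum,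 eval_X, eval_mul, eval_add, eval_sub, eval_pow, eval_ofNat, map_one, map_zero, map_natCast, Nat.cast_ofNat]
  ring

private lemma evalGy {K : Type} [CommRing K] (v : Fin 3 → K) :
    eval v (pderiv 1 (quarticG K)) = v 0^3 - 416*v 0^2*v 1 + 9209*v 0^2*v 2 + 43266*v 0*v 1^2 - 708288*v 0*v 1*v 2 - 30793168*v 0*v 2^2 - 1333360*v 1^3 + 4845993*v 1^2*v 2 + 1745671834*v 1*v 2^2 + 22343910974*v 2^3 := by
  simp only [quarticG, quarticF, map_sub, map_add, map_mul, map_pow, aeval_X, Matrix.cons_val_zero, Matrix.cons_val_one, Matrix.head_cons, Matrix.cons_val_two, Matrix.tail_cons, map_ofNat, pderiv_mul, pderiv_pow, pderiv_X_self, pderiv_X_of_ne (show (1:Fin 3) ≠ 0 by decide), pderiv_X_of_ne (show (2:Fin 3) ≠ 0 by decide), pderiv_X_of_ne (show (0:Fin 3) ≠ 1 by decide), pderiv_X_of_ne (show (2:Fin 3) ≠ 1 by decide), pderiv_X_of_ne (show (0:Fin 3) ≠ 2 by decide), pderiv_X_of_ne (show (1:Fin 3) ≠ 2 by decide), pderiv_one,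 pdnum, eval_X, eval_mul, eval_add, eval_sub, eval_pow, eval_ofNat, map_one, map_zero, map_natCast, Nat.cast_ofNat]
  ring

private lemma evalGz {K : Type} [CommRing K] (v : Fin 3 → K) :
    eval v (pderiv 2 (quarticG K)) = -64*v 0^3 + 9209*v 0^2*v 1 + 525186*v 0^2*v 2 - 354144*v 0*v 1^2 - 61586336*v 0*v 1*v 2 - 1077947409*v 0*v 2^2 + 1615331*v 1^3 + 1745671834*v 1^2*v 2 + 67031732922*v 1*v 2^2 + 655821348952*v 2^3 := by
  simp only [quarticG, quarticF, map_sub, map_add, map_mul, map_pow, aeval_X, Matrix.cons_val_zero, Matrix.cons_val_one, Matrix.head_cons, Matrix.cons_val_two, Matrix.tail_cons, map_ofNat, pderiv_mul, pderiv_pow, pderiv_X_self, pderiv_X_of_ne (show (1:Fin 3) ≠ 0 by decide), pderiv_X_of_ne (show (2:Fin 3) ≠ 0 by decide), pderiv_X_of_ne (show (0:Fin 3) ≠ 1 by decide), pderiv_X_of_ne (show (2:Fin 3) ≠ 1 by decide), pderiv_X_of_ne (show (0:Fin 3) ≠ 2 by decide), pderiv_X_of_ne (show (1:Fin 3) ≠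 2 by decide), pderiv_one, pdnum, eval_X, eval_mul, eval_add, eval_sub, eval_pow, eval_ofNat, map_one, map_zero, map_natCast, Nat.cast_ofNat]
  ring

/-- Let `p ∈ {7, 11}` and let `K` be an algebraically closed field of characteristic `p`.
The common zeros of `g` and its partial derivatives, other than the origin, are exactly the
nonzero scalar multiples of `(0, 0, 1)`; i.e. `(0:0:1)` is the unique singular point of the
plane quartic `g = 0`. -/
theorem quarticG_singular_points_seven_eleven (p : ℕ) (hp : p = 7 ∨ p = 11)
    (K : Type) [Field K] [IsAlgClosed K] [CharP K p]
    (v : Fin 3 → K) (hv : v ≠ 0) :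
    (eval v (quarticG K) = 0 ∧ ∀ i : Fin 3, eval v (pderiv i (quarticG K)) = 0) ↔
      ∃ c : K, c ≠ 0 ∧ v = c • ![0, 0, 1] := by
  constructor
  · rintro ⟨h0, hd⟩
    rw [evalG] at h0
    have h1 := hd 0; rw [evalGx] at h1
    have h2 := hd 1; rw [evalGy] at h2
    have h3 := hd 2; rw [evalGz] at h3
    have hx : v 0 = 0 := by
      have h6 : v 0 ^ 6 = 0 := by
        rcases hp with rfl | rfl
        · have hp : (7 : K) = 0 := by exact_mod_cast CharP.cast_eq_zero K 7
          linear_combination (v 0^2 + v 0*v 1 + 5*v 0*v 2 + 5*v 1^2 + v 1*v 2 + v 2^2 : K) * h0 + (3*v 0^3 + 4*v 0^2*v 1 + 3*v 0^2*v 2 + 3*v 0*v 1^2 + 5*v 0*v 1*v 2 + 3*v 0*v 2^2 + 2*v 1^3 + v 1^2*v 2 + 3*v 1*v 2^2 : K) * h1 + (v 0^3 + 6*v 0^2*v 2 + 3*v 0*v 1*v 2 + 4*v 0*v 2^2 + 2*v 1^3 + 3*v 1*v 2^2 : K) * h2 + (5*v 0*v 1^2 + 6*v 1^3 : K) * h3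 + (58*v 0^5*v 1 - 1225*v 0^5*v 2 - 5929*v 0^4*v 1^2 + 92448*v 0^4*v 1*v 2 + 4128665*v 0^4*v 2^2 + 175981*v 0^3*v 1^3 - 913344*v 0^3*v 1^2*v 2 - 231534146*v 0^3*v 1*v 2^2 - 2960687639*v 0^3*v 2^3 + 282830*v 0^2*v 1^4 + 44653413*v 0^2*v 1^3*v 2 + 663369861*v 0^2*v 1^2*v 2^2 - 4383255000*v 0^2*v 1*v 2^3 - 42146134591*v 0^2*v 2^4 - 831361*v 0*v 1^5 - 1192951847*v 0*v 1^4*v 2 - 47038899393*v 0*v 1^3*v 2^2 - 472572712623*v 0*v 1^2*v 2^3 - 49617062990*v 0*v 1*v 2^4 - 129673580982*v 0*v 2^5 - 769630*v 1^6 - 1498681777*v 1^5*v 2 - 58568757926*v 1^4*v 2^2 - 584496281793*v 1^3*v 2^3 - 121111250468*v 1^2*v 2^4 - 36036147675*v 1*v 2^5 - 23422191034*v 2^6 : K) * hp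
        · have hp : (11 : K) = 0 := by exact_mod_cast CharP.cast_eq_zero K 11
          linear_combination (6*v 0^2 + v 0*v 1 + 7*v 1*v 2 + 7*v 2^2 : K) * h0 + (v 0^3 + 7*v 0^2*v 1 + 10*v 0^2*v 2 + 2*v 0*v 1^2 + 9*v 1^3 + 9*v 1^2*v 2 + v 1*v 2^2 : K) * h1 + (v 0^3 + 2*v 0^2*v 2 + 9*v 0*v 1^2 + 3*v 0*v 1*v 2 + 4*v 0*v 2^2 + 6*v 1^3 + 4*v 1^2*v 2 + 4*v 1*v 2^2 : K) * h2 + (v 0*v 1^2 + 9*v 1^3 : K) * h3 + (37*v 0^5*v 1 - 785*v 0^5*v 2 - 3779*v 0^4*v 1^2 + 57893*v 0^4*v 1*v 2 + 2606902*v 0^4*v 2^2 + 111875*v 0^3*v 1^3 - 290358*v 0^3*v 1^2*v 2 - 139350153*v 0^3*v 1*v 2^2 - 1797491115*v 0^3*v 2^3 + 160894*v 0^2*v 1^4 + 5334623*v 0^2*v 1^3*v 2 - 330993619*v 0^2*v 1^2*v 2^2 - 12207188910*v 0^2*v 1*v 2^3 - 93155032075*v 0^2*v 2^4 + 1238259*v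 0*v 1^5 - 111645638*v 0*v 1^4*v 2 - 6697891067*v 0*v 1^3*v 2^2 - 80314448604*v 0*v 1^2*v 2^3 - 21374213383*v 0*v 1*v 2^4 - 7896403025*v 0*v 2^5 - 606147*v 1^6 - 1429945286*v 1^5*v 2 - 55772940035*v 1^4*v 2^2 - 549642500143*v 1^3*v 2^3 - 23237356734*v 1^2*v 2^4 - 126646460507*v 1*v 2^5 - 104335214606*v 2^6 : K) * hp
      exact pow_eq_zero_iff (n := 6) (by norm_num) |>.mp h6
    have hy : v 1 = 0 := by
      have h6 : v 1 ^ 6 = 0 := by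
        rcases hp with rfl | rfl
        · have hp : (7 : K) = 0 := by exact_mod_cast CharP.cast_eq_zero K 7
          linear_combination (6*v 0*v 1 + v 0*v 2 + 4*v 1^2 + 4*v 1*v 2 + 6*v 2^2 : K) * h0 + (5*v 0^2*v 1 + 6*v 0^2*v 2 + 6*v 0*v 1*v 2 + 4*v 0*v 2^2 + 4*v 1^3 + 3*v 1^2*v 2 + 2*v 1*v 2^2 : K) * h1 + (2*v 0*v 1^2 + 2*v 0*v 1*v 2 + 5*v 0*v 2^2 + 4*v 1^3 + v 1^2*v 2 + 4*v 1*v 2^2 : K) * h2 + (2*v 0*v 1^2 : K) * h3 + (15*v 0^4*v 1^2 + 189*v 0^4*v 1*v 2 + 173*v 0^4*v 2^2 - 2038*v 0^3*v 1^3 - 173195*v 0^3*v 1^2*v 2 - 619451*v 0^3*v 1*v 2^2 - 494086*v 0^3*v 2^3 + 66514*v 0^2*v 1^4 + 18318311*v 0^2*v 1^3*v 2 + 365526211*v 0^2*v 1^2*v 2^2 + 604112417*v 0^2*v 1*v 2^3 + 380785737*v 0^2*v 2^4 + 172430*v 0*v 1^5 - 500533966*v 0*v 1^4*v 2 - 20364048987*v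 0*v 1^3*v 2^2 - 213285949284*v 0*v 1^2*v 2^3 - 150781271930*v 0*v 1*v 2^4 - 38868819154*v 0*v 2^5 + 944159*v 1^6 - 3115038*v 1^5*v 2 - 1479114083*v 1^4*v 2^2 - 26069575464*v 1^3*v 2^3 - 111231581845*v 1^2*v 2^4 - 125505975298*v 1*v 2^5 - 140533146204*v 2^6 : K) * hp
        · have hp : (11 : K) = 0 := by exact_mod_cast CharP.cast_eq_zero K 11
          linear_combination (9*v 0^2 + v 0*v 1 + 6*v 0*v 2 + 8*v 1^2 + 5*v 2^2 : K) * h0 + (8*v 0^3 + 3*v 0^2*v 1 + 9*v 0^2*v 2 + 2*v 0*v 1^2 + 9*v 0*v 1*v 2 + 10*v 0*v 2^2 + 7*v 1^3 + 6*v 1^2*v 2 + 2*v 1*v 2^2 : K) * h1 + (3*v 0*v 1^2 + 7*v 0*v 1*v 2 + 8*v 0*v 2^2 + 9*v 1^3 + 7*v 1^2*v 2 + 7*v 1*v 2^2 : K) * h2 + (3*v 0*v 1^2 + 9*v 1^3 : K) * h3 + (-3*v 0^5*v 1 + 192*v 0^5*v 2 + 489*v 0^4*v 1^2 - 20875*v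 0^4*v 1*v 2 - 596611*v 0^4*v 2^2 - 24504*v 0^3*v 1^3 + 396506*v 0^3*v 1^2*v 2 + 47396840*v 0^3*v 1*v 2^2 + 554726817*v 0^3*v 2^3 + 345304*v 0^2*v 1^4 + 15302836*v 0^2*v 1^3*v 2 - 399961535*v 0^2*v 1^2*v 2^2 - 18089076412*v 0^2*v 1*v 2^3 - 133633501598*v 0^2*v 2^4 + 194911*v 0*v 1^5 - 425291026*v 0*v 1^4*v 2 - 17904323657*v 0*v 1^3*v 2^2 - 188203840554*v 0*v 1^2*v 2^3 - 42225573911*v 0*v 1*v 2^4 - 105190324925*v 0*v 2^5 + 2548*v 1^6 - 1432350645*v 1^5*v 2 - 56889509425*v 1^4*v 2^2 - 571981786423*v 1^3*v 2^3 - 134765134181*v 1^2*v 2^4 - 24309845462*v 1*v 2^5 - 74525153290*v 2^6 : K) * hp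
      exact pow_eq_zero_iff (n := 6) (by norm_num) |>.mp h6
    have hz : v 2 ≠ 0 := by
      intro h
      apply hv
      funext i
      fin_cases i <;> simp [hx, hy, h]
    refine ⟨v 2, hz, ?_⟩
    funext i
    fin_cases i <;> simp [hx, hy]
  · rintro ⟨c, hc, rfl⟩
    have e0 : (c • ![(0:K), 0, 1]) 0 = 0 := by simp
    have e1 : (c • ![(0:K), 0, 1]) 1 = 0 := by simp
    have e2 : (c • ![(0:K), 0, 1]) 2 = c := by simp
    constructor
    · rw [evalG, e0, e1, e2]
      rcases hp with rfl | rfl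
      · have hp : (7 : K) = 0 := by exact_mod_cast CharP.cast_eq_zero K 7
        linear_combination (23422191034 * c^4 : K) * hp
      · have hp : (11 : K) = 0 := by exact_mod_cast CharP.cast_eq_zero K 11
        linear_combination (14905030658 * c^4 : K) * hp
    · intro i
      fin_cases i
      · rw [show (⟨0, by norm_num⟩ : Fin 3) = 0 from rfl, evalGx, e0, e1, e2]
        rcases hp with rfl | rfl
        · have hp : (7 : K) = 0 := by exact_mod_cast CharP.cast_eq_zero K 7
          linear_combination (-51330829 * c^3 : K) * hp
        · have hp : (11 : K) = 0 := by exact_mod_cast CharP.cast_eq_zero K 11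
          linear_combination (-32665073 * c^3 : K) * hp
      · rw [show (⟨1, by norm_num⟩ : Fin 3) = 1 from rfl, evalGy, e0, e1, e2]
        rcases hp with rfl | rfl
        · have hp : (7 : K) = 0 := by exact_mod_cast CharP.cast_eq_zero K 7
          linear_combination (3191987282 * c^3 : K) * hp
        · have hp : (11 : K) = 0 := by exact_mod_cast CharP.cast_eq_zero K 11
          linear_combination (2031264634 * c^3 : K) * hp
      · rw [show (⟨2, by norm_num⟩ : Fin 3) = 2 from rfl, evalGz, e0, e1, e2]
        rcases hp with rfl | rfl
        · have hp : (7 : K) = 0 := by exact_mod_cast CharP.cast_eq_zero K 7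
          linear_combination (93688764136 * c^3 : K) * hp
        · have hp : (11 : K) = 0 := by exact_mod_cast CharP.cast_eq_zero K 11
          linear_combination (59620122632 * c^3 : K) * hp
end

section
/- Let ℓ be a prime with ℓ ∉ {2, 3, 5, 7}. Then there do not exist e ∈ {0, 1} and elements u, v ∈ F_ℓ such that all three of the following equations hold in F_ℓ: 2^{1−e}·v + u = −3, 2^{2−e}·u + 2^{1−e}·u·v + v = 6, and 2^{3−e} + 2^{2−e}·u² + 2^{1−e}·v² + 2^e = −9. -/
/-- For a prime `ℓ ∉ {2, 3, 5, 7}`, there are no `e ∈ {0, 1}` and `u, v ∈ F_ℓ` satisfying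
`2^{1−e}v + u = −3`, `2^{2−e}u + 2^{1−e}uv + v = 6`, and
`2^{3−e} + 2^{2−e}u² + 2^{1−e}v² + 2^e = −9`. -/
theorem no_three_dimensional_factor (ℓ : ℕ) (hℓ : ℓ.Prime)
    (h2 : ℓ ≠ 2) (h3 : ℓ ≠ 3) (h5 : ℓ ≠ 5) (h7 : ℓ ≠ 7) :
    ¬ ∃ e : ℕ, (e = 0 ∨ e = 1) ∧ ∃ u v : ZMod ℓ,
      (2 : ZMod ℓ) ^ (1 - e) * v + u = -3 ∧
      (2 : ZMod ℓ) ^ (2 - e) * u + (2 : ZMod ℓ) ^ (1 - e) * u * v + v = 6 ∧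
      (2 : ZMod ℓ) ^ (3 - e) + (2 : ZMod ℓ) ^ (2 - e) * u ^ 2 + (2 : ZMod ℓ) ^ (1 - e) * v ^ 2
        + (2 : ZMod ℓ) ^ e = -9 := by
  haveI : Fact ℓ.Prime := ⟨hℓ⟩
  rintro ⟨e, he, u, v, h1, h2', h3'⟩
  have c2 : Nat.Coprime ℓ 2 := (Nat.coprime_primes hℓ Nat.prime_two).mpr h2
  have c3 : Nat.Coprime ℓ 3 := (Nat.coprime_primes hℓ Nat.prime_three).mpr h3
  have c5 : Nat.Coprime ℓ 5 := (Nat.coprime_primes hℓ (by norm_num)).mpr h5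
  rcases he with rfl | rfl
  · -- e = 0 : derive 4860 = 0
    have key : (4860 : ZMod ℓ) = 0 := by
      linear_combination
        (441*(2*v+4) + (159 - 4*(21*v+54))*(9*(2*v+4) + 2*(4*u-8*v-12))) * h1
        + (-441 - 9*(159 - 4*(21*v+54))) * h2'
        + (-2*(159 - 4*(21*v+54))) * h3'
    have key' : ((4860 : ℕ) : ZMod ℓ) = 0 := by exact_mod_cast key
    have hdvd : ℓ ∣ 4860 := (ZMod.natCast_eq_zero_iff 4860 ℓ).mp key'
    have hc : Nat.Coprime ℓ 4860 := by
      have h4860 : (4860 : ℕ) = 2 ^ 2 * 3 ^ 5 * 5 := by norm_num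
      rw [h4860]
      exact ((c2.pow_right 2).mul_right (c3.pow_right 5)).mul_right c5
    exact hℓ.one_lt.ne' (Nat.Coprime.eq_one_of_dvd hc hdvd)
  · -- e = 1 : derive 3 = 0
    have key : (3 : ZMod ℓ) = 0 := by
      linear_combination (2*u+v) * h1 - 3*h2' - h3'
    have key' : ((3 : ℕ) : ZMod ℓ) = 0 := by exact_mod_cast key
    have hdvd : ℓ ∣ 3 := (ZMod.natCast_eq_zero_iff 3 ℓ).mp key'
    exact h3 ((Nat.prime_dvd_prime_iff_eq hℓ Nat.prime_three).mp hdvd)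
end

section
/- Let ℓ be a prime and m ≥ 1 an integer, and let k = e₁ + e₂ℓ + ⋯ + e_mℓ^{m−1} where each e_i ∈ {0, 1}. Regard the field K = F_{ℓ^m} as a vector space over F_ℓ, and let the unit group K^× act F_ℓ-linearly on K by t · v = t^k·v. Suppose this action of K^× on K is irreducible, i.e., the only F_ℓ-subspaces of K stable under multiplication by t^k for all t ∈ K^× are 0 and K. Then for every subgroup S of K^× with index [K^× : S] < ℓ − 1, the restricted action of S on K is also irreducible: the only F_ℓ-subspaces of K stable under multiplication by s^k for all s ∈ S are 0 and K. -/
/-!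
An `𝔽_ℓ`-subspace of `K` stable under multiplication by a family of elements is stable under the
subalgebra they generate, so irreducibility means exactly that the family generates `K`. Suppose the
`s ^ k`, `s ∈ S`, generate a proper subfield `𝔽_{ℓ^r}`, and let `d = [K^× : S]`. Then every
`t ^ (d * k)` is fixed by `x ↦ x ^ ℓ ^ r`. On `K`, raising to the power `ℓ` rotates the base-`ℓ`
digits of an exponent, so `t ^ (k * ℓ ^ r) = t ^ k'` where `k'` has the rotated `0/1` digits of `k`.
Both `k` and `k'` are at most `(ℓ ^ m - 1) / (ℓ - 1)` and `d < ℓ - 1`, so `d * k ≡ d * k'` modulo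
`ℓ ^ m - 1` forces `k = k'`. Hence every `t ^ k` lies in the proper subfield fixed by `x ↦ x ^ ℓ ^ r`,
contradicting the irreducibility of the action of `K^×`.
-/

open Finset

theorem Algebra.adjoin_range_eq_top_iff_forall_submodule {R K ι : Type*} [CommSemiring R]
    [DivisionRing K] [Algebra R K] (f : ι → K) :
    (∀ W : Submodule R K, (∀ i, ∀ v ∈ W, f i * v ∈ W) → W = ⊥ ∨ W = ⊤) ↔
      Algebra.adjoin R (Set.range f) = ⊤ := by
  refine ⟨fun h => ?_, fun hf W hW => ?_⟩
  · set M := Algebra.adjoin R (Set.range f)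
    have hstable : ∀ i, ∀ v ∈ Subalgebra.toSubmodule M, f i * v ∈ Subalgebra.toSubmodule M :=
      fun i v hv => M.mul_mem (Algebra.subset_adjoin ⟨i, rfl⟩) hv
    have hne : Subalgebra.toSubmodule M ≠ ⊥ :=
      (Submodule.ne_bot_iff _).2 ⟨1, M.one_mem, one_ne_zero⟩
    exact Algebra.toSubmodule_eq_top.1 ((h _ hstable).resolve_left hne)
  · have hmul : ∀ a : K, ∀ v ∈ W, a * v ∈ W := by
      intro a
      have ha : a ∈ Algebra.adjoin R (Set.range f) := hf ▸ Algebra.mem_top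
      induction ha using Algebra.adjoin_induction with
      | mem x hx => obtain ⟨i, rfl⟩ := hx; exact hW i
      | algebraMap c => exact fun v hv => by rw [← Algebra.smul_def]; exact W.smul_mem c hv
      | add x y _ _ hx hy => exact fun v hv => by rw [add_mul]; exact W.add_mem (hx v hv) (hy v hv)
      | mul x y _ _ hx hy => exact fun v hv => by rw [mul_assoc]; exact hx _ (hy v hv)
    refine or_iff_not_imp_left.2 fun hW0 => W.eq_top_iff'.2 fun x => ?_
    obtain ⟨v, hv, hv0⟩ := W.ne_bot_iff.1 hW0
    simpa [hv0] using hmul (x * v⁻¹) v hv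

section FiniteField

variable {k : Type*} [Field k] [Fintype k]

theorem FiniteField.frobeniusAlgHom_pow_apply {R : Type*} [CommRing R] [Algebra k R] (r : ℕ)
    (x : R) : (frobeniusAlgHom k R ^ r) x = x ^ Fintype.card k ^ r := by
  rw [AlgHom.coe_pow, coe_frobeniusAlgHom, pow_iterate]

variable {K : Type*} [Field K] [Fintype K]

theorem Subalgebra.exists_pow_card_pow_eq_self [Algebra k K] (M : Subalgebra k K) (hM : M ≠ ⊤) :
    ∃ r, 0 < r ∧ r < Module.finrank k K ∧ ∀ a ∈ M, a ^ Fintype.card k ^ r = a := by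
  let _ : Field M := M.isField_of_algebraic.toField
  have := Fintype.ofFinite M
  refine ⟨Module.finrank k M, Module.finrank_pos, ?_, fun a ha => ?_⟩
  · rw [← Subalgebra.finrank_toSubmodule]
    exact Submodule.finrank_lt (by simpa using hM)
  · have hpow := FiniteField.pow_card (⟨a, ha⟩ : M)
    rw [Module.card_eq_pow_finrank (K := k)] at hpow
    exact congrArg Subtype.val hpow

variable {ℓ m : ℕ}

theorem FiniteField.pow_pow_eq_pow_pow_mod (hK : Fintype.card K = ℓ ^ m) (x : K) (n : ℕ) :
    x ^ ℓ ^ n = x ^ ℓ ^ (n % m) := by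
  conv_lhs => rw [← Nat.div_add_mod n m, pow_add, pow_mul ℓ, ← hK, pow_mul x, pow_card_pow]

theorem FiniteField.pow_sum_mul_pow_eq_pow_sum_rotate [NeZero m] (hK : Fintype.card K = ℓ ^ m)
    (e : Fin m → ℕ) (r : ℕ) (x : K) :
    x ^ ((∑ i, e i * ℓ ^ (i : ℕ)) * ℓ ^ r) = x ^ ∑ i, e i * ℓ ^ ((i + Fin.ofNat m r : Fin m) : ℕ) := by
  simp only [sum_mul, ← prod_pow_eq_pow_sum]
  refine prod_congr rfl fun i _ => ?_
  rw [mul_assoc, ← pow_add, mul_comm, pow_mul, mul_comm, pow_mul, pow_pow_eq_pow_pow_mod hK,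
    Fin.val_add, Fin.val_ofNat, Nat.add_mod_mod]

end FiniteField

theorem Nat.sub_one_mul_sum_digits_le {ℓ m : ℕ} (e : Fin m → ℕ) (he : ∀ i, e i ≤ 1)
    (σ : Equiv.Perm (Fin m)) : (ℓ - 1) * ∑ i, e i * ℓ ^ (σ i : ℕ) ≤ ℓ ^ m - 1 := by
  rcases Nat.eq_zero_or_pos ℓ with rfl | hℓ
  · simp
  calc (ℓ - 1) * ∑ i, e i * ℓ ^ (σ i : ℕ) ≤ (ℓ - 1) * ∑ i, ℓ ^ (σ i : ℕ) := by
        gcongr with i; exact mul_le_of_le_one_left' (he i)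
    _ = (ℓ - 1) * ∑ i ∈ range m, ℓ ^ i := by
        rw [Equiv.sum_comp σ (fun i : Fin m => ℓ ^ (i : ℕ)), Fin.sum_univ_eq_sum_range]
    _ = ℓ ^ m - 1 := by rw [mul_comm, geom_sum_mul_of_one_le hℓ]

theorem Nat.eq_of_mul_modEq_mul_of_mul_le {N b d k k' : ℕ} (hN : 0 < N) (hd0 : 0 < d)
    (hd : d < b) (hk : b * k ≤ N) (hk' : b * k' ≤ N) (h : d * k ≡ d * k' [MOD N]) : k = k' := by
  have hlt : ∀ c, b * c ≤ N → d * c < N := fun c hc => by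
    rcases Nat.eq_zero_or_pos c with rfl | hc0
    · simpa using hN
    · exact (Nat.mul_lt_mul_of_pos_right hd hc0).trans_le hc
  exact Nat.eq_of_mul_eq_mul_left hd0 (h.eq_of_lt_of_lt (hlt k hk) (hlt k' hk'))

theorem adjoin_range_pow_subgroup_eq_top {ℓ m : ℕ} [Fact ℓ.Prime] {K : Type*} [Field K]
    [Fintype K] [Algebra (ZMod ℓ) K] (hK : Module.finrank (ZMod ℓ) K = m) (e : Fin m → ℕ)
    (he : ∀ i, e i ≤ 1) {k : ℕ} (hk : k = ∑ i, e i * ℓ ^ (i : ℕ))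
    (htop : Algebra.adjoin (ZMod ℓ) (Set.range fun t : Kˣ => (t : K) ^ k) = ⊤)
    (S : Subgroup Kˣ) (hS : S.index < ℓ - 1) :
    Algebra.adjoin (ZMod ℓ) (Set.range fun s : S => ((s : Kˣ) : K) ^ k) = ⊤ := by
  by_contra hM
  obtain ⟨r, hr0, hrm, hfixM⟩ := Subalgebra.exists_pow_card_pow_eq_self _ hM
  simp only [ZMod.card, hK] at hrm hfixM
  have : NeZero m := ⟨by omega⟩
  have hcard : Fintype.card K = ℓ ^ m := by
    rw [Module.card_eq_pow_finrank (K := ZMod ℓ), ZMod.card, hK]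
  set k' := ∑ i, e i * ℓ ^ ((i + Fin.ofNat m r : Fin m) : ℕ)
  have hshift : ∀ x : K, x ^ (k * ℓ ^ r) = x ^ k' :=
    hk ▸ FiniteField.pow_sum_mul_pow_eq_pow_sum_rotate hcard e r
  obtain ⟨g, hg⟩ := IsCyclic.exists_ofOrder_eq_natCard (α := Kˣ)
  set d := S.index
  have hgd : g ^ (d * k') = g ^ (d * k) := Units.ext <| by
    simp only [Units.val_pow_eq_pow_val, pow_mul]
    rw [← hshift, pow_mul, hfixM _ (Algebra.subset_adjoin ⟨⟨g ^ d, S.pow_index_mem g⟩, by simp⟩)]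
  have hmod : d * k' ≡ d * k [MOD ℓ ^ m - 1] := by
    rwa [pow_eq_pow_iff_modEq, hg, Nat.card_units, Nat.card_eq_fintype_card, hcard] at hgd
  have hkk : k' = k := Nat.eq_of_mul_modEq_mul_of_mul_le
    (Nat.sub_pos_of_lt (Nat.one_lt_pow (by omega) (Fact.out : ℓ.Prime).one_lt))
    (Nat.pos_of_ne_zero S.index_ne_zero_of_finite) hS
    (Nat.sub_one_mul_sum_digits_le e he (Equiv.addRight _))
    (hk ▸ Nat.sub_one_mul_sum_digits_le e he 1) hmod
  have hfix : AlgHom.equalizer (FiniteField.frobeniusAlgHom (ZMod ℓ) K ^ r) 1 = ⊤ := by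
    refine eq_top_iff.2 (htop ▸ Algebra.adjoin_le ?_)
    rintro _ ⟨t, rfl⟩
    rw [SetLike.mem_coe, AlgHom.mem_equalizer, FiniteField.frobeniusAlgHom_pow_apply, ZMod.card,
      ← pow_mul, hshift, hkk]
    rfl
  exact pow_ne_one_of_lt_orderOf hr0.ne' (by rwa [FiniteField.orderOf_frobeniusAlgHom, hK])
    (AlgHom.equalizer_eq_top.1 hfix)

/-- Let `ℓ` be a prime, `m ≥ 1`, and `k = e₁ + e₂ℓ + ⋯ + e_mℓ^{m−1}` with every `e_i ∈ {0,1}`.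
If the action of `K^×` on `K = F_{ℓ^m}` by `t · v = t^k v` is irreducible over `F_ℓ`, then for
every subgroup `S ≤ K^×` of index `< ℓ − 1`, the restricted action of `S` is irreducible. -/
theorem irreducible_of_small_index_subgroup (ℓ : ℕ) [Fact ℓ.Prime] (m : ℕ) (hm : 1 ≤ m)
    (e : Fin m → ℕ) (he : ∀ i, e i = 0 ∨ e i = 1)
    (k : ℕ) (hk : k = ∑ i : Fin m, e i * ℓ ^ (i : ℕ))
    (hirr : ∀ W : Submodule (ZMod ℓ) (GaloisField ℓ m),
      (∀ t : (GaloisField ℓ m)ˣ, ∀ v ∈ W, (t : GaloisField ℓ m) ^ k * v ∈ W) →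
      W = ⊥ ∨ W = ⊤)
    (S : Subgroup (GaloisField ℓ m)ˣ) (hS : S.index < ℓ - 1) :
    ∀ W : Submodule (ZMod ℓ) (GaloisField ℓ m),
      (∀ s ∈ S, ∀ v ∈ W, (s : GaloisField ℓ m) ^ k * v ∈ W) →
      W = ⊥ ∨ W = ⊤ := by
  intro W hW
  have := Fintype.ofFinite (GaloisField ℓ m)
  have hS' := adjoin_range_pow_subgroup_eq_top (GaloisField.finrank ℓ (by omega)) e
    (fun i => (he i).elim (·.le.trans zero_le_one) (·.le)) hk
    ((Algebra.adjoin_range_eq_top_iff_forall_submodule _).1 hirr) S hS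
  exact (Algebra.adjoin_range_eq_top_iff_forall_submodule _).2 hS' W fun s => hW s s.2
end
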